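/- arXiv:2310.16396 — 10 statements merged into one kernel-verified Lean document; each statement's English description precedes it below -/
import Mathlib

section
/- The map κ : G → M₀ = Δ_ψ/(Δ_χΔ_ψ) defined by κ(g) = ψ(g)⁻¹·(ρ(g) − ψ(g)·1) (mod Δ_χΔ_ψ) is a 1-cocycle for the action of G on M₀ via χψ⁻¹; that is, for all g₁, g₂ ∈ G, κ(g₁g₂) = κ(g₁) + χ(g₁)ψ(g₁)⁻¹·κ(g₂). Equivalently, κ(g₁g₂) − κ(g₁) − χ(g₁)ψ(g₁)⁻¹·κ(g₂) equals the class of ψ(g₁g₂)⁻¹·(ρ(g₁) − χ(g₁))·(ρ(g₂) − ψ(g₂)), which vanishes in M₀. -/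
private lemma stmt3_key {T K : Type*} [CommRing T] [CommRing K] [Algebra T K]
    (A B : Matrix (Fin 2) (Fin 2) K) (a₁ a₂ c₁ u₁ u₂ : T)
    (h₂ : u₂ * a₂ = 1) :
    (u₁ * u₂) • (A * B - (a₁ * a₂) • (1 : Matrix (Fin 2) (Fin 2) K))
      - u₁ • (A - a₁ • 1) - (c₁ * u₁) • (u₂ • (B - a₂ • 1))
      = (u₁ * u₂) • ((A - c₁ • 1) * (B - a₂ • 1)) := by
  simp only [mul_sub, sub_mul, smul_sub, smul_smul, mul_smul_comm, smul_mul_assoc, one_mul,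
    mul_one]
  match_scalars <;> first | linear_combination -u₁*a₁*h₂ | linear_combination u₁*h₂ | ring

/-- the map `κ(g) = ψ(g)⁻¹ (ρ(g) − ψ(g)·1) mod Δ_χΔ_ψ` is a 1-cocycle for
the action of `G` via `χψ⁻¹`.  We work in the quotient of `M₂(K)` by the `T`-submodule `P`
generated by the products `(ρ(t) − χ(t))(ρ(t′) − ψ(t′))`; since `Δ_ψ/Δ_χΔ_ψ` embeds in this
quotient, the cocycle identity there is the cocycle identity in `M₀`.  Moreover the
cocycle defect equals the class of `ψ(g₁g₂)⁻¹ (ρ(g₁) − χ(g₁))(ρ(g₂) − ψ(g₂))`,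
which vanishes. -/
theorem stmt3 {T : Type*} [CommRing T] {K : Type*} [CommRing K] [Algebra T K]
    {G : Type*} [Group G]
    (ρ : G →* (Matrix (Fin 2) (Fin 2) K)ˣ)
    (χ ψ : G →* Tˣ)
    (ρalg : MonoidAlgebra T G →ₐ[T] Matrix (Fin 2) (Fin 2) K)
    (χalg ψalg : MonoidAlgebra T G →ₐ[T] T)
    (hρ : ∀ g : G, ρalg (MonoidAlgebra.of T G g) = (ρ g : Matrix (Fin 2) (Fin 2) K))
    (hχ : ∀ g : G, χalg (MonoidAlgebra.of T G g) = (χ g : T))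
    (hψ : ∀ g : G, ψalg (MonoidAlgebra.of T G g) = (ψ g : T))
    (P : Submodule T (Matrix (Fin 2) (Fin 2) K))
    (hP : P = Submodule.span T {x : Matrix (Fin 2) (Fin 2) K | ∃ t t' : MonoidAlgebra T G,
        x = (ρalg t - χalg t • (1 : Matrix (Fin 2) (Fin 2) K))
          * (ρalg t' - ψalg t' • (1 : Matrix (Fin 2) (Fin 2) K))})
    (κ : G → (Matrix (Fin 2) (Fin 2) K) ⧸ P)
    (hκ : ∀ g : G, κ g = Submodule.Quotient.mk
        ((((ψ g)⁻¹ : Tˣ) : T) • ((ρ g : Matrix (Fin 2) (Fin 2) K)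
          - ((ψ g : T)) • (1 : Matrix (Fin 2) (Fin 2) K)))) :
    (∀ g₁ g₂ : G, κ (g₁ * g₂) = κ g₁ + ((χ g₁ * (ψ g₁)⁻¹ : Tˣ) : T) • κ g₂) ∧
    (∀ g₁ g₂ : G,
      κ (g₁ * g₂) - κ g₁ - ((χ g₁ * (ψ g₁)⁻¹ : Tˣ) : T) • κ g₂
        = Submodule.Quotient.mk ((((ψ (g₁ * g₂))⁻¹ : Tˣ) : T) •
            (((ρ g₁ : Matrix (Fin 2) (Fin 2) K) - ((χ g₁ : T)) • (1 : Matrix (Fin 2) (Fin 2) K))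
              * ((ρ g₂ : Matrix (Fin 2) (Fin 2) K)
                - ((ψ g₂ : T)) • (1 : Matrix (Fin 2) (Fin 2) K))))) ∧
    (∀ g₁ g₂ : G,
      (Submodule.Quotient.mk ((((ψ (g₁ * g₂))⁻¹ : Tˣ) : T) •
          (((ρ g₁ : Matrix (Fin 2) (Fin 2) K) - ((χ g₁ : T)) • (1 : Matrix (Fin 2) (Fin 2) K))
            * ((ρ g₂ : Matrix (Fin 2) (Fin 2) K)
              - ((ψ g₂ : T)) • (1 : Matrix (Fin 2) (Fin 2) K))))
        : (Matrix (Fin 2) (Fin 2) K) ⧸ P) = 0) := by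
  have h3 : ∀ g₁ g₂ : G,
      (Submodule.Quotient.mk ((((ψ (g₁ * g₂))⁻¹ : Tˣ) : T) •
          (((ρ g₁ : Matrix (Fin 2) (Fin 2) K) - ((χ g₁ : T)) • (1 : Matrix (Fin 2) (Fin 2) K))
            * ((ρ g₂ : Matrix (Fin 2) (Fin 2) K)
              - ((ψ g₂ : T)) • (1 : Matrix (Fin 2) (Fin 2) K))))
        : (Matrix (Fin 2) (Fin 2) K) ⧸ P) = 0 := by
    intro g₁ g₂
    rw [Submodule.Quotient.mk_eq_zero, hP]
    refine Submodule.smul_mem _ _ (Submodule.subset_span ?_)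
    exact ⟨MonoidAlgebra.of T G g₁, MonoidAlgebra.of T G g₂, by rw [hρ, hχ, hρ, hψ]⟩
  have h2 : ∀ g₁ g₂ : G,
      κ (g₁ * g₂) - κ g₁ - ((χ g₁ * (ψ g₁)⁻¹ : Tˣ) : T) • κ g₂
        = Submodule.Quotient.mk ((((ψ (g₁ * g₂))⁻¹ : Tˣ) : T) •
            (((ρ g₁ : Matrix (Fin 2) (Fin 2) K) - ((χ g₁ : T)) • (1 : Matrix (Fin 2) (Fin 2) K))
              * ((ρ g₂ : Matrix (Fin 2) (Fin 2) K)
                - ((ψ g₂ : T)) • (1 : Matrix (Fin 2) (Fin 2) K)))) := by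
    intro g₁ g₂
    rw [hκ, hκ, hκ, ← Submodule.Quotient.mk_smul, ← Submodule.Quotient.mk_sub,
      ← Submodule.Quotient.mk_sub]
    congr 1
    have e1 : ((ρ (g₁ * g₂) : Matrix (Fin 2) (Fin 2) K))
        = (ρ g₁ : Matrix (Fin 2) (Fin 2) K) * (ρ g₂ : Matrix (Fin 2) (Fin 2) K) := by
      rw [map_mul, Units.val_mul]
    have e2 : (((ψ (g₁ * g₂))⁻¹ : Tˣ) : T) = (((ψ g₁)⁻¹ : Tˣ) : T) * (((ψ g₂)⁻¹ : Tˣ) : T) := by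
      rw [map_mul, mul_inv, Units.val_mul]
    have e3 : ((ψ (g₁ * g₂) : Tˣ) : T) = ((ψ g₁ : Tˣ) : T) * ((ψ g₂ : Tˣ) : T) := by
      rw [map_mul, Units.val_mul]
    have e4 : ((χ g₁ * (ψ g₁)⁻¹ : Tˣ) : T) = ((χ g₁ : Tˣ) : T) * (((ψ g₁)⁻¹ : Tˣ) : T) := by
      rw [Units.val_mul]
    rw [e1, e2, e3, e4]
    exact stmt3_key _ _ _ _ _ _ _ (by rw [← Units.val_mul, inv_mul_cancel, Units.val_one])
  refine ⟨fun g₁ g₂ => ?_, h2, h3⟩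
  have := (h2 g₁ g₂).trans (h3 g₁ g₂)
  rw [sub_sub, sub_eq_zero] at this
  rw [this]
end

section
/- Let T ⊆ K be an inclusion of commutative rings, I ⊆ T an ideal, G a monoid, and ρ : G → M₂(K) a monoid homomorphism (multiplicative, sending 1 to the identity matrix). Let χ, ψ : G → T be monoid homomorphisms into the multiplicative monoid of T, and assume that for every g ∈ G, tr ρ(g) lies in T and tr ρ(g) − (χ(g) + ψ(g)) ∈ I. Fix g₁, …, g_r ∈ G and set ρ_i = ρ(g_i) − ψ(g_i)·1 ∈ M₂(K). Let T⟨X₁, …, X_r⟩ be the free (noncommutative) T-algebra on r generators, and let V : T⟨X₁, …, X_r⟩ → T be the T-algebra homomorphism with V(X_i) = χ(g_i) − ψ(g_i). Then for every f ∈ T⟨X₁, …, X_r⟩ whose constant term is 0 (i.e. f lies in the two-sided ideal generated by X₁, …, X_r), the trace of f evaluated at (ρ₁, …, ρ_r) (via the T-algebra map T⟨X₁, …, X_r⟩ → M₂(K) sending X_i to ρ_i) lies in T, and tr(f(ρ₁, …, ρ_r)) − V(f) ∈ I. -/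
/-!
Track, for a matrix `A`, the functional `h ↦ tr (ρ h * A)` rather than `tr A` alone. The triples
`(A, a, b)` for which `tr (ρ h * A) ∈ T` and `tr (ρ h * A) ≡ χ h * a + ψ h * b (mod I)` for every
`h` form a `T`-submodule of `Mₙ(K) × T × T` that contains `(1, 1, 1)` and is stable under left
multiplication by `(ρ g, χ g, ψ g)`, because `ρ`, `χ`, `ψ` are multiplicative. Hence it is stable
under left multiplication by the image of any noncommutative polynomial in
`(ρ gᵢ, χ gᵢ, ψ gᵢ) - ψ gᵢ • 1 = (ρᵢ, χ gᵢ - ψ gᵢ, 0)`. Applied to `(1, 1, 1)` and `h = 1`, this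
gives `tr f(ρ₁, …, ρᵣ) ≡ V f + ε f (mod I)`, where `ε` is the augmentation, which kills `f`.
-/

section TraceCongr

variable {T K G n : Type*} [CommRing T] [CommRing K] [Algebra T K] [Monoid G]
  [Fintype n] [DecidableEq n]
  (I : Ideal T) (ρ : G →* Matrix n n K) (χ ψ : G →* T)

def traceCongrSubmodule : Submodule T (Matrix n n K × T × T) where
  carrier := {p | ∀ h : G, ∃ t : T,
    algebraMap T K t = (ρ h * p.1).trace ∧ t - (χ h * p.2.1 + ψ h * p.2.2) ∈ I}
  add_mem' := by
    rintro p q hp hq h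
    obtain ⟨s, hs, hsI⟩ := hp h
    obtain ⟨t, ht, htI⟩ := hq h
    refine ⟨s + t, by simp [hs, ht, mul_add, Matrix.trace_add], ?_⟩
    convert I.add_mem hsI htI using 1
    simp only [Prod.fst_add, Prod.snd_add]
    ring
  zero_mem' := fun _ => ⟨0, by simp, by simp⟩
  smul_mem' := by
    rintro c p hp h
    obtain ⟨t, ht, htI⟩ := hp h
    refine ⟨c * t, ?_, ?_⟩
    · rw [Prod.smul_fst, Matrix.mul_smul, Matrix.trace_smul, Algebra.smul_def, map_mul, ht]
    · convert I.mul_mem_left c htI using 1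
      simp only [Prod.smul_fst, Prod.smul_snd, smul_eq_mul]
      ring

variable {I ρ χ ψ}

theorem one_mem_traceCongrSubmodule
    (htr : ∀ g : G, ∃ t : T, algebraMap T K t = (ρ g).trace ∧ t - (χ g + ψ g) ∈ I) :
    (1 : Matrix n n K × T × T) ∈ traceCongrSubmodule I ρ χ ψ := by
  intro h
  simpa using htr h

theorem mul_mem_traceCongrSubmodule (g : G) {p : Matrix n n K × T × T}
    (hp : p ∈ traceCongrSubmodule I ρ χ ψ) :
    (ρ g, χ g, ψ g) * p ∈ traceCongrSubmodule I ρ χ ψ := by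
  intro h
  obtain ⟨t, ht, htI⟩ := hp (h * g)
  refine ⟨t, by simpa [mul_assoc] using ht, ?_⟩
  simpa [mul_assoc] using htI

theorem freeAlgebra_mul_mem_traceCongrSubmodule {X : Type*} (g : X → G)
    (Φ : FreeAlgebra T X →ₐ[T] Matrix n n K × T × T)
    (hΦ : ∀ i, Φ (FreeAlgebra.ι T i) = (ρ (g i), χ (g i), ψ (g i)) - ψ (g i) • 1)
    (f : FreeAlgebra T X) {p : Matrix n n K × T × T}
    (hp : p ∈ traceCongrSubmodule I ρ χ ψ) :
    Φ f * p ∈ traceCongrSubmodule I ρ χ ψ := by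
  induction f using FreeAlgebra.induction generalizing p with
  | grade0 c =>
    rw [AlgHom.commutes, ← Algebra.smul_def]
    exact Submodule.smul_mem _ c hp
  | grade1 i =>
    rw [hΦ, sub_mul, smul_mul_assoc, one_mul]
    exact Submodule.sub_mem _ (mul_mem_traceCongrSubmodule (g i) hp) (Submodule.smul_mem _ _ hp)
  | mul a b ha hb =>
    rw [map_mul, mul_assoc]
    exact ha (hb hp)
  | add a b ha hb =>
    rw [map_add, add_mul]
    exact Submodule.add_mem _ (ha hp) (hb hp)

end TraceCongr

theorem stmt5_general {T : Type*} [CommRing T] {K : Type*} [CommRing K] [Algebra T K]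
    (I : Ideal T)
    {G : Type*} [Monoid G]
    (ρ : G →* Matrix (Fin 2) (Fin 2) K)
    (χ ψ : G →* T)
    (htr : ∀ g : G, ∃ t : T,
        algebraMap T K t = Matrix.trace (ρ g) ∧ t - (χ g + ψ g) ∈ I)
    (r : ℕ) (g : Fin r → G)
    (f : FreeAlgebra T (Fin r))
    (hf : (FreeAlgebra.lift T (fun _ : Fin r => (0 : T))) f = 0) :
    ∃ t : T,
      algebraMap T K t
        = Matrix.trace ((FreeAlgebra.lift T (fun i : Fin r =>
            ρ (g i) - ψ (g i) • (1 : Matrix (Fin 2) (Fin 2) K))) f) ∧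
      t - (FreeAlgebra.lift T (fun i : Fin r => χ (g i) - ψ (g i))) f ∈ I := by
  let Φ := (FreeAlgebra.lift T fun i => ρ (g i) - ψ (g i) • (1 : Matrix (Fin 2) (Fin 2) K)).prod
    ((FreeAlgebra.lift T fun i => χ (g i) - ψ (g i)).prod (FreeAlgebra.lift T fun _ => (0 : T)))
  have hΦ : ∀ i, Φ (FreeAlgebra.ι T i) = (ρ (g i), χ (g i), ψ (g i)) - ψ (g i) • 1 := by
    intro i
    ext <;> simp [Φ]
  obtain ⟨t, ht, htI⟩ := freeAlgebra_mul_mem_traceCongrSubmodule g Φ hΦ f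
    (one_mem_traceCongrSubmodule htr) 1
  refine ⟨t, by simpa [Φ] using ht, ?_⟩
  simpa [Φ, hf] using htI

/-- the trace identity lemma (Lemma `l:tr-char`).  For any noncommutative
polynomial `f` with zero constant term (i.e. killed by the augmentation sending every
generator to `0`), the trace of `f(ρ₁, …, ρ_r)`, where `ρ_i = ρ(g_i) − ψ(g_i)·1`, lies in
`T` and is congruent modulo `I` to `V(f)`, where `V` sends `X_i ↦ χ(g_i) − ψ(g_i)`. -/
theorem stmt5 {T : Type*} [CommRing T] {K : Type*} [CommRing K] [Algebra T K]
    (hinj : Function.Injective (algebraMap T K))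
    (I : Ideal T)
    {G : Type*} [Monoid G]
    (ρ : G →* Matrix (Fin 2) (Fin 2) K)
    (χ ψ : G →* T)
    (htr : ∀ g : G, ∃ t : T,
        algebraMap T K t = Matrix.trace (ρ g) ∧ t - (χ g + ψ g) ∈ I)
    (r : ℕ) (g : Fin r → G)
    (f : FreeAlgebra T (Fin r))
    (hf : (FreeAlgebra.lift T (fun _ : Fin r => (0 : T))) f = 0) :
    ∃ t : T,
      algebraMap T K t
        = Matrix.trace ((FreeAlgebra.lift T (fun i : Fin r =>
            ρ (g i) - ψ (g i) • (1 : Matrix (Fin 2) (Fin 2) K))) f) ∧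
      t - (FreeAlgebra.lift T (fun i : Fin r => χ (g i) - ψ (g i))) f ∈ I :=
  stmt5_general I ρ χ ψ htr r g f hf
end

section
/- Let R be a commutative ring, ρ₁, ρ₂ ∈ M₂(R) with entries ρ_i = [[a_i, b_i],[c_i, d_i]], and ν₁, ν₂, δ₁₂₁, δ₁₂₂, δ₂₁₁, δ₂₁₂ ∈ R satisfying the matrix equations (ρ₁ + ν₁·1)·ρ₂ = δ₁₂₁·ρ₁ + δ₁₂₂·ρ₂ and (ρ₂ + ν₂·1)·ρ₁ = δ₂₁₁·ρ₁ + δ₂₁₂·ρ₂. Set t_i = a_i + d_i = tr ρ_i and t₁₂ = tr(ρ₁ρ₂). Define the 2×2 matrices E = [[δ₁₂₁, δ₁₂₂],[δ₂₁₁, δ₂₁₂]] and E′ = [[δ₁₂₁ − d₂, δ₁₂₂ − a₁ − ν₁],[δ₂₁₁ − a₂ − ν₂, δ₂₁₂ − d₁]]. Then det E′ − det E = (t₁ + ν₁)·δ₂₁₁ + (t₂ + ν₂)·δ₁₂₂ − (t₁₂ + t₁ν₂ + t₂ν₁ + ν₁ν₂). -/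
/-- the explicit determinant identity of the example (§3.5,
equation `e:example`): `det E′ − det E = (t₁+ν₁)δ₂₁₁ + (t₂+ν₂)δ₁₂₂ − (t₁₂ + t₁ν₂ + t₂ν₁ + ν₁ν₂)`. -/
theorem stmt6 {R : Type*} [CommRing R]
    (a₁ b₁ c₁ d₁ a₂ b₂ c₂ d₂ ν₁ ν₂ δ₁₂₁ δ₁₂₂ δ₂₁₁ δ₂₁₂ : R)
    (h₁₂ : (!![a₁, b₁; c₁, d₁] + ν₁ • (1 : Matrix (Fin 2) (Fin 2) R)) * !![a₂, b₂; c₂, d₂]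
      = δ₁₂₁ • !![a₁, b₁; c₁, d₁] + δ₁₂₂ • !![a₂, b₂; c₂, d₂])
    (h₂₁ : (!![a₂, b₂; c₂, d₂] + ν₂ • (1 : Matrix (Fin 2) (Fin 2) R)) * !![a₁, b₁; c₁, d₁]
      = δ₂₁₁ • !![a₁, b₁; c₁, d₁] + δ₂₁₂ • !![a₂, b₂; c₂, d₂]) :
    (!![δ₁₂₁ - d₂, δ₁₂₂ - a₁ - ν₁; δ₂₁₁ - a₂ - ν₂, δ₂₁₂ - d₁]).det
      - (!![δ₁₂₁, δ₁₂₂; δ₂₁₁, δ₂₁₂]).det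
    = (a₁ + d₁ + ν₁) * δ₂₁₁ + (a₂ + d₂ + ν₂) * δ₁₂₂
      - ((!![a₁, b₁; c₁, d₁] * !![a₂, b₂; c₂, d₂]).trace
          + (a₁ + d₁) * ν₂ + (a₂ + d₂) * ν₁ + ν₁ * ν₂) := by
  have e1 := congrFun (congrFun h₁₂ 1) 1
  have e2 := congrFun (congrFun h₂₁ 1) 1
  simp [Matrix.mul_apply, Fin.sum_univ_two, Matrix.one_apply] at e1 e2
  simp [Matrix.det_fin_two, Matrix.trace_fin_two, Matrix.mul_apply, Fin.sum_univ_two]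
  linear_combination e1 + e2
end

section
/- Let S be a commutative ring. For matrices ρ_σ = [[a_σ, b_σ],[c_σ, d_σ]], ρ_τ = [[a_τ, b_τ],[c_τ, d_τ]] ∈ M₂(S) and scalars x_σ, x_τ ∈ S, define the 2×2 matrix M(ρ_σ, ρ_τ, x_σ, x_τ) = [[A, B],[C, D]] where A = b_σ c_τ − (x_τ − d_τ)(x_σ − a_σ), B = b_σ(x_τ − a_τ) − b_τ(x_σ − a_σ), C = c_σ(x_τ − d_τ) − c_τ(x_σ − d_σ), and D = b_τ c_σ − (x_σ − d_σ)(x_τ − a_τ). Then for every invertible lower-triangular matrix g = [[x, 0],[y, z]] ∈ GL₂(S) (x, z ∈ Sˣ), one has M(g⁻¹ρ_σ g, g⁻¹ρ_τ g, x_σ, x_τ) = g⁻¹·M(ρ_σ, ρ_τ, x_σ, x_τ)·g. -/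
/-- The matrix `M(ρ_σ, ρ_τ, x_σ, x_τ) = [[A(σ,τ), B(σ,τ)], [C(σ,τ), D(σ,τ)]]`
of relation generators from equation `e:ABCD` of the paper. -/
def relMatrix {S : Type*} [CommRing S]
    (ρσ ρτ : Matrix (Fin 2) (Fin 2) S) (xσ xτ : S) : Matrix (Fin 2) (Fin 2) S :=
  !![ρσ 0 1 * ρτ 1 0 - (xτ - ρτ 1 1) * (xσ - ρσ 0 0),
     ρσ 0 1 * (xτ - ρτ 0 0) - ρτ 0 1 * (xσ - ρσ 0 0);
     ρσ 1 0 * (xτ - ρτ 1 1) - ρτ 1 0 * (xσ - ρσ 1 1),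
     ρτ 0 1 * ρσ 1 0 - (xσ - ρσ 1 1) * (xτ - ρτ 0 0)]

theorem relMatrix_eq {S : Type*} [CommRing S]
    (ρσ ρτ : Matrix (Fin 2) (Fin 2) S) (xσ xτ : S) :
    relMatrix ρσ ρτ xσ xτ
      = -((xσ • (1 : Matrix (Fin 2) (Fin 2) S) - ρσ)
          * (xτ • (1 : Matrix (Fin 2) (Fin 2) S) - ρτ).adjugate) := by
  ext i j
  fin_cases i <;> fin_cases j <;>
    simp [relMatrix, Matrix.adjugate_fin_two, Matrix.mul_apply, Fin.sum_univ_two,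
      Matrix.one_apply] <;> ring

/-- Lemma `l:stable`: the quadruple `(A(σ,τ), B(σ,τ), C(σ,τ), D(σ,τ))`
transforms under simultaneous conjugation by an invertible lower-triangular matrix
`g = [[x, 0], [y, z]]` exactly like the adjoint representation:
`M(g⁻¹ρ_σg, g⁻¹ρ_τg, x_σ, x_τ) = g⁻¹ · M(ρ_σ, ρ_τ, x_σ, x_τ) · g`. -/
theorem stmt7 {S : Type*} [CommRing S]
    (ρσ ρτ : Matrix (Fin 2) (Fin 2) S) (xσ xτ : S)
    (x z : Sˣ) (y : S)
    (g gi : Matrix (Fin 2) (Fin 2) S)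
    (hg : g = !![(x : S), 0; y, (z : S)])
    (hgi : gi * g = 1) (hig : g * gi = 1) :
    relMatrix (gi * ρσ * g) (gi * ρτ * g) xσ xτ
      = gi * relMatrix ρσ ρτ xσ xτ * g := by
  have hdet : g.det * gi.det = 1 := by
    rw [← Matrix.det_mul, hig, Matrix.det_one]
  have hadj_g : g.adjugate = g.det • gi := by
    have h1 : gi * (g * g.adjugate) = gi * (g.det • 1) := by rw [Matrix.mul_adjugate]
    rw [← mul_assoc, hgi, one_mul] at h1
    rw [h1, Matrix.mul_smul, mul_one]
  have hadj_gi : gi.adjugate = gi.det • g := by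
    have h1 : g * (gi * gi.adjugate) = g * (gi.det • 1) := by rw [Matrix.mul_adjugate]
    rw [← mul_assoc, hig, one_mul] at h1
    rw [h1, Matrix.mul_smul, mul_one]
  have hσ : xσ • (1 : Matrix (Fin 2) (Fin 2) S) - gi * ρσ * g
      = gi * (xσ • (1 : Matrix (Fin 2) (Fin 2) S) - ρσ) * g := by
    rw [Matrix.mul_sub, Matrix.sub_mul, Matrix.mul_smul, mul_one,
      Matrix.smul_mul, hgi]
  have hτ : xτ • (1 : Matrix (Fin 2) (Fin 2) S) - gi * ρτ * g
      = gi * (xτ • (1 : Matrix (Fin 2) (Fin 2) S) - ρτ) * g := by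
    rw [Matrix.mul_sub, Matrix.sub_mul, Matrix.mul_smul, mul_one,
      Matrix.smul_mul, hgi]
  rw [relMatrix_eq, relMatrix_eq, hσ, hτ, Matrix.adjugate_mul_distrib,
    Matrix.adjugate_mul_distrib, hadj_g, hadj_gi]
  have key : gi * (xσ • 1 - ρσ) * g * (gi * ((xτ • 1 - ρτ).adjugate * g))
      = gi * ((xσ • 1 - ρσ) * (xτ • 1 - ρτ).adjugate) * g := by
    calc gi * (xσ • 1 - ρσ) * g * (gi * ((xτ • 1 - ρτ).adjugate * g))
        = gi * (xσ • 1 - ρσ) * (g * gi) * ((xτ • 1 - ρτ).adjugate * g) := by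
          simp only [mul_assoc]
      _ = gi * ((xσ • 1 - ρσ) * (xτ • 1 - ρτ).adjugate) * g := by
          rw [hig, mul_one, mul_assoc, mul_assoc, mul_assoc]
  simp only [Matrix.mul_smul, Matrix.smul_mul, smul_smul, mul_neg, neg_mul, smul_neg]
  have hdet2 : gi.det * g.det = 1 := by rw [mul_comm]; exact hdet
  rw [key]
  first
    | rw [hdet, one_smul]
    | rw [hdet2, one_smul]
end

section
/- Let k be a commutative ring, G a group, and r ≥ 1. Suppose given k-linear representations C_0, …, C_r and D_0, …, D_r of G, G-equivariant maps f_i : C_i → C_{i−1} and g_i : D_i → D_{i−1} for 1 ≤ i ≤ r, and G-equivariant maps ι_i : C_i → D_i for 0 ≤ i ≤ r with g_i ∘ ι_i = ι_{i−1} ∘ f_i for all i. Assume: (a) the complex 0 → C_r → C_{r−1} → ⋯ → C_1 → C_0 → 0 is exact (exact at each C_i for 0 < i < r, f_r is injective, and f_1 is surjective); (b) for every i ≥ 1 and every 1 ≤ j ≤ r, the group cohomology H^i(G, D_j) = 0. Then for every j ≥ 1, the induced map ι_{0,*} : H^j(G, C_0) → H^j(G, D_0) on group cohomology is the zero map. 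-/
/-!
Write `Zᵢ = ker (Cᵢ₊₁ → Cᵢ)` and `Wᵢ = ker (Dᵢ₊₁ → Dᵢ)`. Exactness of `C` gives short exact
sequences `0 → Zᵢ₊₁ → Cᵢ₊₂ → Zᵢ → 0` and `0 → Z₀ → C₁ → C₀ → 0`, which `ι` maps to the complexes
`Wᵢ₊₁ ↪ Dᵢ₊₂ → Wᵢ` and `W₀ ↪ D₁ → D₀`. Factoring these maps through the short exact sequences
`0 → Wᵢ₊₁ → Dᵢ₊₂ → Dᵢ₊₂ / Wᵢ₊₁ → 0`, naturality of the connecting map shows that if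
`Hⁿ⁺¹(Zᵢ₊₁ → Wᵢ₊₁)` vanishes and `Hⁿ(Dᵢ₊₂) = 0` (so that the connecting map into `Hⁿ⁺¹(Wᵢ₊₁)` is
injective), then `Hⁿ(Zᵢ → Wᵢ)` vanishes. Starting from `Z_{r-1} = 0`, descending induction kills
all the maps `Hⁿ(Zᵢ) → Hⁿ(Wᵢ)` with `n ≥ 1`, and one more step kills `Hⁿ(C₀) → Hⁿ(D₀)`.
-/

open CategoryTheory Limits Opposite

universe v u

section ExtNaturality

variable {𝒞 : Type u} [Category.{v} 𝒞] [Abelian 𝒞] (R : Type v) [CommRing R] [Linear R 𝒞]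

noncomputable def ChainComplex.linearYonedaMap (K : ChainComplex 𝒞 ℕ) {Y Y' : 𝒞} (φ : Y ⟶ Y') :
    K.linearYonedaObj R Y ⟶ K.linearYonedaObj R Y' :=
  (HomologicalComplex.unopFunctor _ _).map
    ((NatTrans.mapHomologicalComplex
      (NatTrans.rightOp ((linearYoneda R 𝒞).map φ)) (ComplexShape.down ℕ)).app K).op

variable {R} in
lemma CategoryTheory.ProjectiveResolution.ext_map_eq [EnoughProjectives 𝒞] {X : 𝒞}
    (P : ProjectiveResolution X) {Y Y' : 𝒞} (φ : Y ⟶ Y') (n : ℕ) :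
    ((Ext R 𝒞 n).obj (op X)).map φ =
      (P.isoExt n Y).hom ≫ HomologicalComplex.homologyMap (P.complex.linearYonedaMap R φ) n ≫
        (P.isoExt n Y').inv := by
  have hExt : ((Ext R 𝒞 n).obj (op X)).map φ =
      ((NatTrans.leftDerived (NatTrans.rightOp ((linearYoneda R 𝒞).map φ)) n).app X).unop := rfl
  have hHom : (HomologicalComplex.homologyFunctor _ (ComplexShape.down ℕ) n).map
      ((NatTrans.mapHomologicalComplex (NatTrans.rightOp ((linearYoneda R 𝒞).map φ))
        (ComplexShape.down ℕ)).app P.complex) =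
      ((HomologicalComplex.homologyOp (P.complex.linearYonedaObj R Y') n).hom ≫
        (HomologicalComplex.homologyMap (P.complex.linearYonedaMap R φ) n).op) ≫
        (HomologicalComplex.homologyOp (P.complex.linearYonedaObj R Y) n).inv :=
    (Iso.eq_comp_inv _).2
      (HomologicalComplex.homologyOp_hom_naturality (P.complex.linearYonedaMap R φ) n)
  rw [hExt, ProjectiveResolution.leftDerived_app_eq _ P n, hHom]
  rfl

end ExtNaturality

namespace CategoryTheory.ShortComplex

variable {𝒞 : Type u} [Category.{v} 𝒞] [Abelian 𝒞]

noncomputable abbrev kernelLiftSequence {A B B' : 𝒞} (a : A ⟶ B) (b : B ⟶ B') (w : a ≫ b = 0) :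
    ShortComplex 𝒞 :=
  ShortComplex.mk (kernel.ι a) (kernel.lift b a w) (by ext; simp)

lemma kernelLiftSequence_shortExact {A B B' : 𝒞} {a : A ⟶ B} {b : B ⟶ B'} {w : a ≫ b = 0}
    (hab : (ShortComplex.mk a b w).Exact) : (kernelLiftSequence a b w).ShortExact where
  exact := exact_of_f_is_kernel _
    (isKernelOfComp (kernel.ι b) a (kernelIsKernel a) _ (kernel.lift_ι b a w))
  epi_g := hab.epi_kernelLift

noncomputable def kernelLiftSequenceMap {A B B' A₁ B₁ B₁' : 𝒞} {a : A ⟶ B} {b : B ⟶ B'}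
    {w : a ≫ b = 0} {a₁ : A₁ ⟶ B₁} {b₁ : B₁ ⟶ B₁'} {w₁ : a₁ ≫ b₁ = 0}
    (α : A ⟶ A₁) (β : B ⟶ B₁) (γ : B' ⟶ B₁') (hα : a ≫ β = α ≫ a₁) (hβ : b ≫ γ = β ≫ b₁) :
    kernelLiftSequence a b w ⟶ kernelLiftSequence a₁ b₁ w₁ :=
  homMk (kernel.map a a₁ α β hα) α (kernel.map b b₁ β γ hβ) (by simp) (by ext; simp [hα])

end CategoryTheory.ShortComplex

variable {k G : Type u} [CommRing k] [Group G]

namespace Rep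

lemma comp_eq_zero_of_function_exact {A B C : Rep k G} {a : A ⟶ B} {b : B ⟶ C}
    (h : Function.Exact a.hom b.hom) : a ≫ b = 0 := by
  ext x
  exact h.apply_apply_eq_zero x

lemma shortComplex_exact_of_function_exact (S : ShortComplex (Rep k G))
    (h : Function.Exact S.f.hom S.g.hom) : S.Exact := by
  rw [← S.exact_map_iff_of_faithful (forget₂ (Rep k G) (ModuleCat k)),
    ShortComplex.moduleCat_exact_iff]
  exact fun x hx => (h x).1 hx

end Rep

namespace groupCohomology

lemma inhomogeneousCochainsIso_hom_naturality {A B : Rep k G} (φ : A ⟶ B) :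
    cochainsMap (MonoidHom.id G) φ ≫ (inhomogeneousCochainsIso B).hom =
      (inhomogeneousCochainsIso A).hom ≫ (Rep.barComplex k G).linearYonedaMap k φ := by
  ext n x
  change (Rep.freeLiftLEquiv k G _ B).symm (fun g => φ.hom (x g)) =
    (Rep.freeLiftLEquiv k G _ A).symm x ≫ φ
  rw [LinearEquiv.symm_apply_eq]
  ext i
  simp [Rep.homEquiv]

theorem map_τ₃_eq_zero_of_map_τ₁_eq_zero {X Y : ShortComplex (Rep k G)} (hX : X.ShortExact)
    [Mono Y.f] (φ : X ⟶ Y) {n : ℕ} (h₁ : map (.id G) φ.τ₁ (n + 1) = 0)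
    (h₂ : IsZero (groupCohomology Y.X₂ n)) : map (.id G) φ.τ₃ n = 0 := by
  have := hX.epi_g
  let Y' := ShortComplex.mk Y.f (cokernel.π Y.f) (cokernel.condition Y.f)
  have hY' : Y'.ShortExact :=
    { exact := ShortComplex.exact_of_g_is_cokernel _ (cokernelIsCokernel Y.f) }
  obtain ⟨τ₃, hτ₃⟩ : ∃ τ₃ : X.X₃ ⟶ cokernel Y.f, X.g ≫ τ₃ = φ.τ₂ ≫ cokernel.π Y.f :=
    ⟨_, (CokernelCofork.IsColimit.desc' hX.gIsCokernel _ (by simp [← φ.comm₁₂_assoc])).2⟩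
  let ψ : X ⟶ Y' :=
    { τ₁ := φ.τ₁, τ₂ := φ.τ₂, τ₃ := τ₃, comm₁₂ := φ.comm₁₂, comm₂₃ := hτ₃.symm }
  have hφ₃ : φ.τ₃ = τ₃ ≫ cokernel.desc Y.f Y.g Y.zero := by
    rw [← cancel_epi X.g, reassoc_of% hτ₃, cokernel.π_desc, φ.comm₂₃]
  have hψ₃ : map (.id G) τ₃ n = 0 := by
    have := mono_δ_of_isZero hY' n h₂
    rw [← cancel_mono (δ hY' n (n + 1) rfl), zero_comp]
    exact (δ_naturality hX hY' ψ n (n + 1) rfl).symm.trans (by simp [ψ, h₁])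
  rw [hφ₃, map_id_comp, hψ₃, zero_comp]

end groupCohomology

lemma groupCohomologyIsoExt_hom_eq (A : Rep k G) (n : ℕ) :
    (groupCohomologyIsoExt A n).hom =
      HomologicalComplex.homologyMap (groupCohomology.inhomogeneousCochainsIso A).hom n ≫
        ((Rep.barResolution k G).isoExt n A).inv := rfl

lemma groupCohomologyIsoExt_hom_comp_ext_map {A B : Rep k G} (φ : A ⟶ B) (n : ℕ) :
    (groupCohomologyIsoExt A n).hom ≫ ((Ext k (Rep k G) n).obj (op (Rep.trivial k G k))).map φ =
      groupCohomology.map (MonoidHom.id G) φ n ≫ (groupCohomologyIsoExt B n).hom := by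
  rw [(Rep.barResolution k G).ext_map_eq, groupCohomologyIsoExt_hom_eq,
    groupCohomologyIsoExt_hom_eq]
  -- `erw`: `(Rep.barResolution k G).complex` is `Rep.barComplex k G` only after unfolding
  erw [Category.assoc, Iso.inv_hom_id_assoc, ← HomologicalComplex.homologyMap_comp_assoc,
    ← groupCohomology.inhomogeneousCochainsIso_hom_naturality,
    HomologicalComplex.homologyMap_comp_assoc]
  rfl

section Cascade

variable {C D : ℕ → Rep k G} {f : ∀ i, C (i + 1) ⟶ C i} {g : ∀ i, D (i + 1) ⟶ D i}
  {ι : ∀ i, C i ⟶ D i} {r : ℕ}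

theorem groupCohomology.map_kernelMap_eq_zero
    (hcomm : ∀ i, i + 1 ≤ r → ι (i + 1) ≫ g i = f i ≫ ι i)
    (hg : ∀ i, i + 2 ≤ r → g (i + 1) ≫ g i = 0)
    (hexact : ∀ i, i + 2 ≤ r → Function.Exact (f (i + 1)).hom (f i).hom)
    (hinj : Function.Injective (f (r - 1)).hom)
    (hacyc : ∀ j, 1 ≤ j → j ≤ r → ∀ n, IsZero (groupCohomology (D j) (n + 1)))
    {i : ℕ} (hi : i + 1 ≤ r) (n : ℕ) :
    map (.id G) (kernel.map (f i) (g i) (ι (i + 1)) (ι i) (hcomm i hi).symm) (n + 1) = 0 := by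
  have hi' : i ≤ r - 1 := by omega
  induction hi' using Nat.decreasingInduction generalizing n with
  | self =>
    have := (Rep.mono_iff_injective _).2 hinj
    rw [(isZero_kernel_of_mono (f (r - 1))).eq_of_src (kernel.map _ _ _ _ _) 0]
    exact (groupCohomology.functor k G (n + 1)).map_zero _ _
  | of_succ i hlt ih =>
    have hf : f (i + 1) ≫ f i = 0 := Rep.comp_eq_zero_of_function_exact (hexact i (by omega))
    have hX := ShortComplex.kernelLiftSequence_shortExact
      (Rep.shortComplex_exact_of_function_exact (ShortComplex.mk _ _ hf) (hexact i (by omega)))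
    exact map_τ₃_eq_zero_of_map_τ₁_eq_zero hX
      (ShortComplex.kernelLiftSequenceMap (w₁ := hg i (by omega)) (ι (i + 2)) (ι (i + 1)) (ι i)
        (hcomm (i + 1) (by omega)).symm (hcomm i hi).symm)
      (ih (by omega) (n + 1)) (hacyc (i + 2) (by omega) (by omega) n)

end Cascade

theorem stmt8_general {k : Type} [CommRing k] {G : Type} [Group G] (r : ℕ) (hr : 1 ≤ r)
    (C D : ℕ → Rep k G)
    (f : ∀ i : ℕ, C (i + 1) ⟶ C i)
    (gm : ∀ i : ℕ, D (i + 1) ⟶ D i)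
    (ι : ∀ i : ℕ, C i ⟶ D i)
    (hcomm : ∀ i : ℕ, i + 1 ≤ r → ι (i + 1) ≫ gm i = f i ≫ ι i)
    (hDcx : ∀ i : ℕ, i + 2 ≤ r → gm (i + 1) ≫ gm i = 0)
    (hsurj : Function.Surjective ⇑((f 0).hom))
    (hinj : Function.Injective ⇑((f (r - 1)).hom))
    (hexact : ∀ i : ℕ, i + 2 ≤ r → Function.Exact ⇑((f (i + 1)).hom) ⇑((f i).hom))
    (hacyc : ∀ i : ℕ, 1 ≤ i → ∀ j : ℕ, 1 ≤ j → j ≤ r →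
      Limits.IsZero (groupCohomology (D j) i)) :
    ∀ j : ℕ, 1 ≤ j →
      (groupCohomologyIsoExt (C 0) j).hom
        ≫ ((Ext k (Rep k G) j).obj (Opposite.op (Rep.trivial k G k))).map (ι 0)
        ≫ (groupCohomologyIsoExt (D 0) j).inv = 0 := by
  intro j hj
  obtain ⟨n, rfl⟩ : ∃ n, j = n + 1 := ⟨j - 1, by omega⟩
  have hacyc' : ∀ j, 1 ≤ j → j ≤ r → ∀ n, IsZero (groupCohomology (D j) (n + 1)) :=
    fun j h₁ h₂ n => hacyc (n + 1) (by omega) j h₁ h₂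
  have hX : (ShortComplex.kernelSequence (f 0)).ShortExact :=
    { exact := ShortComplex.kernelSequence_exact _
      epi_g := (Rep.epi_iff_surjective _).2 hsurj }
  have hι₀ : groupCohomology.map (.id G) (ι 0) (n + 1) = 0 :=
    groupCohomology.map_τ₃_eq_zero_of_map_τ₁_eq_zero hX
      (ShortComplex.homMk (S₂ := ShortComplex.kernelSequence (gm 0))
        (kernel.map _ _ _ _ (hcomm 0 hr).symm) (ι 1) (ι 0) (kernel.lift_ι _ _ _) (hcomm 0 hr))
      (groupCohomology.map_kernelMap_eq_zero hcomm hDcx hexact hinj hacyc' hr (n + 1))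
      (hacyc' 1 le_rfl hr n)
  rw [← Category.assoc, groupCohomologyIsoExt_hom_comp_ext_map, hι₀, zero_comp, zero_comp]

/-- the cascade argument, Theorem `t:push`: given a morphism of
complexes of `k`-linear `G`-representations as in Theorem `t:comm`, where `C^•` is exact
and the `D_j` (`1 ≤ j ≤ r`) are acyclic, the map `ι_{0,*} : H^j(G, C_0) → H^j(G, D_0)`
induced on group cohomology vanishes for all `j ≥ 1`.  The induced map is expressed via
the isomorphism `groupCohomologyIsoExt` with the functorial `Ext(k, −)`. -/
theorem stmt8 {k : Type} [CommRing k] {G : Type} [Group G] (r : ℕ) (hr : 1 ≤ r)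
    (C D : ℕ → Rep k G)
    (f : ∀ i : ℕ, C (i + 1) ⟶ C i)
    (gm : ∀ i : ℕ, D (i + 1) ⟶ D i)
    (ι : ∀ i : ℕ, C i ⟶ D i)
    (hcomm : ∀ i : ℕ, i + 1 ≤ r → ι (i + 1) ≫ gm i = f i ≫ ι i)
    (hCcx : ∀ i : ℕ, i + 2 ≤ r → f (i + 1) ≫ f i = 0)
    (hDcx : ∀ i : ℕ, i + 2 ≤ r → gm (i + 1) ≫ gm i = 0)
    (hsurj : Function.Surjective ⇑((f 0).hom))
    (hinj : Function.Injective ⇑((f (r - 1)).hom))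
    (hexact : ∀ i : ℕ, i + 2 ≤ r → Function.Exact ⇑((f (i + 1)).hom) ⇑((f i).hom))
    (hacyc : ∀ i : ℕ, 1 ≤ i → ∀ j : ℕ, 1 ≤ j → j ≤ r →
      Limits.IsZero (groupCohomology (D j) i)) :
    ∀ j : ℕ, 1 ≤ j →
      (groupCohomologyIsoExt (C 0) j).hom
        ≫ ((Ext k (Rep k G) j).obj (Opposite.op (Rep.trivial k G k))).map (ι 0)
        ≫ (groupCohomologyIsoExt (D 0) j).inv = 0 :=
  stmt8_general r hr C D f gm ι hcomm hDcx hsurj hinj hexact hacyc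
end

section
/- Let R be a commutative ring, n ≥ 2, and b, b′ : {1,…,n} → R. Let f : Rⁿ → R² be the R-linear map with f(e_i) = (b_i, b′_i), and set r_{ij} = b_i b′_j − b_j b′_i and d_{ijk} = r_{ij}·e_k + r_{jk}·e_i + r_{ki}·e_j ∈ Rⁿ. Suppose that for every k with 2 ≤ k ≤ n, the following holds: whenever x ∈ R satisfies r_{1k}·x ∈ (r_{12}, …, r_{1(k−1)}) (the ideal generated by r_{12},…,r_{1(k−1)}), then x belongs to the ideal generated by { r_{ij} : 1 ≤ i, j < k }. Then the kernel of f is generated as an R-submodule of Rⁿ by the elements d_{ijk} for 1 ≤ i < j < k ≤ n. -/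
/-!
Induct on the support of `x ∈ ker f`. If `x` vanishes beyond `k`, then `∑ₜ r₁ₜ xₜ = 0`
(it is `b₁ (b' ⬝ x) - b'₁ (b ⬝ x)`), so `r₁ₖ xₖ ∈ (r₁ⱼ : j < k)` and the hypothesis puts `xₖ`
in `(rᵢⱼ : i, j < k)`, the `k`-th coordinates of `span {dᵢⱼₖ : i, j < k}`. Subtracting such an
element, which vanishes beyond `k`, lowers the support; a kernel vector supported at `1` is
killed by the hypothesis for `k = 2`, since `r₁₂ x₁ = b'₂ (b₁ x₁) - b₂ (b'₁ x₁) = 0`.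
-/

open Matrix

namespace BuchsbaumRim

variable {R : Type*} [CommRing R] {n : ℕ} (b b' : Fin n → R)

def minor (i j : Fin n) : R := b i * b' j - b j * b' i

def syzygy (i j k : Fin n) : Fin n → R :=
  Pi.single k (minor b b' i j) + Pi.single i (minor b b' j k) + Pi.single j (minor b b' k i)

def syzygySpan : Submodule R (Fin n → R) :=
  Submodule.span R {v | ∃ i j k, i < j ∧ j < k ∧ v = syzygy b b' i j k}

def syzygySpanAt (k : Fin n) : Submodule R (Fin n → R) :=
  Submodule.span R {v | ∃ i j, i < k ∧ j < k ∧ v = syzygy b b' i j k}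

abbrev ker : Submodule R (Fin n → R) := LinearMap.ker (Matrix.of ![b, b']).mulVecLin

variable {b b'}

lemma mem_ker_iff {x : Fin n → R} : x ∈ ker b b' ↔ b ⬝ᵥ x = 0 ∧ b' ⬝ᵥ x = 0 := by
  simp [funext_iff, Fin.forall_fin_two]

lemma minor_self (i : Fin n) : minor b b' i i = 0 := sub_self _

lemma minor_swap (i j : Fin n) : minor b b' j i = -minor b b' i j :=
  (neg_sub _ _).symm

lemma syzygy_self (i k : Fin n) : syzygy b b' i i k = 0 := by
  ext t
  simp only [syzygy, Pi.add_apply, Pi.single_apply, Pi.zero_apply, minor]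
  split_ifs <;> ring

lemma syzygy_swap (i j k : Fin n) : syzygy b b' j i k = -syzygy b b' i j k := by
  ext t
  simp only [syzygy, Pi.add_apply, Pi.neg_apply, Pi.single_apply, minor]
  split_ifs <;> ring

lemma dotProduct_syzygy (v : Fin n → R) (i j k : Fin n) :
    v ⬝ᵥ syzygy b b' i j k = v k * minor b b' i j + v i * minor b b' j k + v j * minor b b' k i := by
  simp only [syzygy, dotProduct_add, dotProduct_single]

lemma syzygy_mem_ker (i j k : Fin n) : syzygy b b' i j k ∈ ker b b' := by
  rw [mem_ker_iff, dotProduct_syzygy, dotProduct_syzygy]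
  constructor <;> (simp only [minor]; ring)

lemma syzygySpan_le_ker : syzygySpan b b' ≤ ker b b' :=
  Submodule.span_le.2 fun _ ⟨i, j, k, _, _, hv⟩ ↦ hv ▸ syzygy_mem_ker (b := b) (b' := b') i j k

lemma syzygySpanAt_le_syzygySpan (k : Fin n) : syzygySpanAt b b' k ≤ syzygySpan b b' := by
  refine Submodule.span_le.2 fun _ ⟨i, j, hik, hjk, hv⟩ ↦ hv ▸ ?_
  rcases lt_trichotomy i j with hij | rfl | hji
  · exact Submodule.subset_span ⟨i, j, k, hij, hjk, rfl⟩
  · rw [syzygy_self]; exact zero_mem _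
  · rw [syzygy_swap]; exact neg_mem (Submodule.subset_span ⟨j, i, k, hji, hik, rfl⟩)

lemma syzygySpanAt_le_pi (k : Fin n) :
    syzygySpanAt b b' k ≤ Submodule.pi {t | k < t} fun _ ↦ ⊥ := by
  refine Submodule.span_le.2 fun _ ⟨i, j, hik, hjk, hv⟩ ↦ ?_
  simp only [SetLike.mem_coe, Submodule.mem_pi, Submodule.mem_bot, hv]
  intro t (hkt : k < t)
  simp [syzygy, hkt.ne', (hik.trans hkt).ne', (hjk.trans hkt).ne']

lemma span_minor_le_map_syzygySpanAt (k : Fin n) :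
    Ideal.span {y | ∃ i j, i < k ∧ j < k ∧ y = minor b b' i j} ≤
      (syzygySpanAt b b' k).map (LinearMap.proj k) := by
  refine Submodule.span_le.2 fun _ ⟨i, j, hik, hjk, hy⟩ ↦ ?_
  refine ⟨syzygy b b' i j k, Submodule.subset_span ⟨i, j, hik, hjk, rfl⟩, ?_⟩
  simp [syzygy, hik.ne', hjk.ne', hy]

lemma sum_minor_mul_eq_zero {x : Fin n → R} (hx : x ∈ ker b b') (s : Fin n) :
    ∑ t, minor b b' s t * x t = 0 := by
  obtain ⟨h, h'⟩ := mem_ker_iff.1 hx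
  calc ∑ t, minor b b' s t * x t = b s * (b' ⬝ᵥ x) - b' s * (b ⬝ᵥ x) := by
        simp only [dotProduct, Finset.mul_sum, ← Finset.sum_sub_distrib, minor]
        exact Finset.sum_congr rfl fun t _ ↦ by ring
    _ = 0 := by rw [h, h', mul_zero, mul_zero, sub_zero]

variable (b b') in
def ColonCondition (h0 : 0 < n) (k : Fin n) : Prop :=
  ∀ x : R, minor b b' ⟨0, h0⟩ k * x ∈
      Ideal.span {y | ∃ j, j ≠ ⟨0, h0⟩ ∧ j < k ∧ y = minor b b' ⟨0, h0⟩ j} →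
    x ∈ Ideal.span {y | ∃ i j, i < k ∧ j < k ∧ y = minor b b' i j}

lemma eq_zero_of_mem_ker_of_forall_ne (hn : 1 < n)
    (hreg : ColonCondition b b' (by omega) ⟨1, hn⟩) {x : Fin n → R} (hx : x ∈ ker b b')
    (hx0 : ∀ t, t ≠ ⟨0, by omega⟩ → x t = 0) : x = 0 := by
  set o : Fin n := ⟨0, by omega⟩
  have hmul : minor b b' ⟨1, hn⟩ o * x o = 0 := by
    rw [← sum_minor_mul_eq_zero hx ⟨1, hn⟩,
      Finset.sum_eq_single o (fun t _ ht ↦ by rw [hx0 t ht, mul_zero]) (by simp)]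
  have hxo : x o ∈ Ideal.span {y | ∃ i j, i < ⟨1, hn⟩ ∧ j < ⟨1, hn⟩ ∧ y = minor b b' i j} :=
    hreg _ (by rw [minor_swap, neg_mul, hmul, neg_zero]; exact zero_mem _)
  have hspan : Ideal.span {y | ∃ i j, i < (⟨1, hn⟩ : Fin n) ∧ j < ⟨1, hn⟩ ∧
      y = minor b b' i j} = ⊥ := by
    refine Ideal.span_eq_bot.2 ?_
    rintro _ ⟨i, j, hi, hj, rfl⟩
    rw [show i = j from Fin.ext (by simp only [Fin.lt_def] at hi hj; omega), minor_self]
  ext t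
  by_cases ht : t = o
  · rw [ht, Pi.zero_apply, ← Ideal.mem_bot, ← hspan]; exact hxo
  · exact hx0 t ht

lemma exists_mem_syzygySpan_eqOn (h0 : 0 < n) {k : Fin n} (hreg : ColonCondition b b' h0 k)
    {x : Fin n → R} (hx : x ∈ ker b b') (hxk : ∀ t, k < t → x t = 0) :
    ∃ z ∈ syzygySpan b b', ∀ t, k ≤ t → z t = x t := by
  set o : Fin n := ⟨0, h0⟩
  have hcolon : minor b b' o k * x k ∈
      Ideal.span {y | ∃ j, j ≠ o ∧ j < k ∧ y = minor b b' o j} := by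
    have hsplit := Finset.add_sum_erase Finset.univ (fun t ↦ minor b b' o t * x t)
      (Finset.mem_univ k)
    rw [sum_minor_mul_eq_zero hx o, add_eq_zero_iff_eq_neg] at hsplit
    rw [hsplit]
    refine neg_mem (Ideal.sum_mem _ fun t ht ↦ ?_)
    rcases lt_or_gt_of_ne (Finset.ne_of_mem_erase ht) with htk | hkt
    · by_cases hto : t = o
      · rw [hto, minor_self, zero_mul]; exact zero_mem _
      · exact Ideal.mul_mem_right _ _ (Ideal.subset_span ⟨t, hto, htk, rfl⟩)
    · rw [hxk t hkt, mul_zero]; exact zero_mem _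
  obtain ⟨z, hz, hzk⟩ := span_minor_le_map_syzygySpanAt k (hreg _ hcolon)
  refine ⟨z, syzygySpanAt_le_syzygySpan k hz, fun t hkt ↦ ?_⟩
  rcases hkt.eq_or_lt with rfl | hkt
  · exact hzk
  · rw [hxk t hkt]; exact Submodule.mem_pi.1 (syzygySpanAt_le_pi k hz) t hkt

theorem mem_syzygySpan_of_mem_ker (hn : 1 < n)
    (hreg : ∀ k : Fin n, k ≠ ⟨0, by omega⟩ → ColonCondition b b' (by omega) k)
    {x : Fin n → R} (hx : x ∈ ker b b') : x ∈ syzygySpan b b' := by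
  suffices H : ∀ m ≤ n, ∀ x ∈ ker b b', (∀ t : Fin n, m ≤ t.val → x t = 0) →
      x ∈ syzygySpan b b' from H n le_rfl x hx fun t ht ↦ absurd t.isLt (by omega)
  intro m
  induction m with
  | zero =>
    intro _ x _ hx0
    rw [show x = 0 from funext fun t ↦ hx0 t (Nat.zero_le _)]
    exact zero_mem _
  | succ m ih =>
    intro hm x hx hxm
    rcases Nat.eq_zero_or_pos m with rfl | hm0
    · rw [eq_zero_of_mem_ker_of_forall_ne hn (hreg _ (by simp [Fin.ext_iff])) hx
        fun t ht ↦ hxm t (Nat.one_le_iff_ne_zero.2 fun h ↦ ht (Fin.ext h))]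
      exact zero_mem _
    · obtain ⟨z, hz, hzx⟩ := exists_mem_syzygySpan_eqOn (by omega)
        (hreg ⟨m, hm⟩ (by simp [Fin.ext_iff]; omega)) hx fun t ht ↦ hxm t ht
      have hxz : x - z ∈ syzygySpan b b' := ih (by omega) _ (sub_mem hx (syzygySpan_le_ker hz))
        fun t ht ↦ by rw [Pi.sub_apply, hzx t ht, sub_self]
      simpa using add_mem hxz hz

end BuchsbaumRim

open BuchsbaumRim in
/-- the regularity criterion, Lemma `l:reg`: under the stated saturation
hypothesis on the `2×2` minors `r_{ij} = b_i b′_j − b_j b′_i`, the kernel of the map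
`Rⁿ → R²`, `x ↦ (∑ b_i x_i, ∑ b′_i x_i)`, is generated by the elements
`d_{ijk} = r_{ij} e_k + r_{jk} e_i + r_{ki} e_j` for `i < j < k`.
(The indices `1, …, n` of the paper are realized as `Fin n`, with `1` corresponding to
the index `⟨0, _⟩`.) -/
theorem stmt10 {R : Type*} [CommRing R] (n : ℕ) (hn : 2 ≤ n)
    (b b' : Fin n → R)
    (hreg : ∀ k : Fin n, k ≠ ⟨0, by omega⟩ → ∀ x : R,
      (b ⟨0, by omega⟩ * b' k - b k * b' ⟨0, by omega⟩) * x ∈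
          Ideal.span {y : R | ∃ j : Fin n, j ≠ ⟨0, by omega⟩ ∧ j < k ∧
            y = b ⟨0, by omega⟩ * b' j - b j * b' ⟨0, by omega⟩} →
        x ∈ Ideal.span {y : R | ∃ i j : Fin n, i < k ∧ j < k ∧ y = b i * b' j - b j * b' i}) :
    ∀ x : Fin n → R,
      ((∑ i, b i * x i = 0 ∧ ∑ i, b' i * x i = 0) ↔
        x ∈ Submodule.span R {v : Fin n → R | ∃ i j k : Fin n, i < j ∧ j < k ∧
          v = Pi.single k (b i * b' j - b j * b' i)
            + Pi.single i (b j * b' k - b k * b' j)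
            + Pi.single j (b k * b' i - b i * b' k)}) := by
  intro x
  change b ⬝ᵥ x = 0 ∧ b' ⬝ᵥ x = 0 ↔ x ∈ syzygySpan b b'
  rw [← mem_ker_iff]
  exact ⟨mem_syzygySpan_of_mem_ker hn hreg, (syzygySpan_le_ker ·)⟩
end

section
/- Let R₀ be a commutative ring and R = R₀[b₁, …, b_n, b′₁, …, b′_n] the polynomial ring over R₀ in 2n variables. Fix 2 ≤ k ≤ n and let J_k ⊆ R be the ideal generated by { r_{ij} = b_i b′_j − b_j b′_i : 1 ≤ i, j ≤ k }. Then J_k is saturated with respect to b′₁: for every x ∈ R and every natural number e, if (b′₁)^e · x ∈ J_k then x ∈ J_k. -/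
/-!
Substitute `b_i ↦ u * b′_i` for `i < k` into a polynomial ring with one more variable `u`. This
kills every `r_{ij}`, and its kernel is exactly `J_k`: straightening `b_i b′_j ≡ b_j b′_i`
(`j < i`) rewrites every monomial modulo `J_k` as a combination of standard monomials, in which
every `b`-index among the first `k` columns is at most every `b′`-index, and the substitution
sends distinct standard monomials to distinct monomials. As `b′₁` is sent to a variable, which
is a nonzerodivisor, `(b′₁)^e * x ∈ J_k` forces `x ∈ J_k`.
-/

open MvPolynomial

theorem Finsupp.exists_eq_add_single_of_ne_zero {α : Type*} {d : α →₀ ℕ} {a : α} (h : d a ≠ 0) :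
    ∃ d₀, d = d₀ + single a 1 :=
  ⟨d - single a 1, (tsub_add_cancel_of_le (single_le_iff.2 (Nat.one_le_iff_ne_zero.2 h))).symm⟩

theorem MvPolynomial.eq_zero_of_mapDomain_eq_zero {R σ τ : Type*} [CommSemiring R]
    {f : (σ →₀ ℕ) →+ (τ →₀ ℕ)} {S : Set (σ →₀ ℕ)} (hf : Set.InjOn f S) {p : MvPolynomial σ R}
    (hp : p ∈ restrictSupport R S) (h : AddMonoidAlgebra.mapDomainAlgHom R R f p = 0) : p = 0 :=
  AddMonoidAlgebra.coeff_injective <| Finsupp.mapDomain_injOn S hf hp (by simp)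
    (congrArg AddMonoidAlgebra.coeff h)

namespace GenericMinors

variable (R : Type*) [CommRing R] (n k : ℕ)

def minors : Set (MvPolynomial (Fin n ⊕ Fin n) R) :=
  {y | ∃ i j : Fin n, (i : ℕ) < k ∧ (j : ℕ) < k ∧
    y = X (.inl i) * X (.inr j) - X (.inl j) * X (.inr i)}

/-- Exponent vector of the image of each variable under `b_i ↦ u * b′_i` (for `i < k`), where
`u = X none` and all other variables are kept. -/
noncomputable def substExp : Fin n ⊕ Fin n → Option (Fin n ⊕ Fin n) →₀ ℕ
  | .inl i => if (i : ℕ) < k then .single none 1 + .single (some (.inr i)) 1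
      else .single (some (.inl i)) 1
  | .inr j => .single (some (.inr j)) 1

noncomputable def substExpHom : (Fin n ⊕ Fin n →₀ ℕ) →+ (Option (Fin n ⊕ Fin n) →₀ ℕ) :=
  (Finsupp.linearCombination ℕ (substExp n k)).toAddMonoidHom

noncomputable def subst :
    MvPolynomial (Fin n ⊕ Fin n) R →ₐ[R] MvPolynomial (Option (Fin n ⊕ Fin n)) R :=
  AddMonoidAlgebra.mapDomainAlgHom R R (substExpHom n k)

def IsStandard (d : Fin n ⊕ Fin n →₀ ℕ) : Prop :=
  ∀ i j : Fin n, (i : ℕ) < k → (j : ℕ) < k → d (.inl i) ≠ 0 → d (.inr j) ≠ 0 → i ≤ j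

noncomputable def bWeight (d : Fin n ⊕ Fin n →₀ ℕ) : ℕ :=
  Finsupp.linearCombination ℕ (Sum.elim (fun i : Fin n => (i : ℕ)) 0) d

variable {R n k}

theorem subst_X (s : Fin n ⊕ Fin n) : subst R n k (X s) = monomial (substExp n k s) 1 := by
  simp [subst, substExpHom, X, monomial]

theorem substExpHom_apply (d : Fin n ⊕ Fin n →₀ ℕ) (x : Option (Fin n ⊕ Fin n)) :
    substExpHom n k d x = ∑ s, d s * substExp n k s x := by
  simp [substExpHom, Finsupp.linearCombination_apply, Finsupp.sum_fintype]

theorem substExpHom_none (d : Fin n ⊕ Fin n →₀ ℕ) :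
    substExpHom n k d none =
      ∑ i ∈ Finset.univ.filter (fun i : Fin n => (i : ℕ) < k), d (.inl i) := by
  simp [substExpHom_apply, Fintype.sum_sum_type, substExp, DFunLike.ite_apply, Finset.sum_filter]

theorem substExpHom_some_inl (d : Fin n ⊕ Fin n →₀ ℕ) {i : Fin n} (hi : ¬ (i : ℕ) < k) :
    substExpHom n k d (some (.inl i)) = d (.inl i) := by
  rw [substExpHom_apply, Fintype.sum_sum_type, Fintype.sum_eq_single i, Fintype.sum_eq_zero]
  all_goals intros; simp_all [substExp, DFunLike.ite_apply]

theorem substExpHom_some_inr (d : Fin n ⊕ Fin n →₀ ℕ) (j : Fin n) :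
    substExpHom n k d (some (.inr j)) = (if (j : ℕ) < k then d (.inl j) else 0) + d (.inr j) := by
  rw [substExpHom_apply, Fintype.sum_sum_type, Fintype.sum_eq_single j, Fintype.sum_eq_single j]
  all_goals intros; simp_all [substExp, DFunLike.ite_apply]

theorem apply_inl_le_of_isStandard {d d' : Fin n ⊕ Fin n →₀ ℕ} (hd : IsStandard n k d)
    (h : substExpHom n k d = substExpHom n k d') {j : Fin n} (hj : (j : ℕ) < k)
    (hbelow : ∀ i < j, d (.inl i) = d' (.inl i)) : d' (.inl j) ≤ d (.inl j) := by
  -- Fewer `b`'s than `d'` in column `j` means more `b′`'s there, hence by standardness no `b`'s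
  -- in later columns, so `d` has fewer `b`'s overall; but `u` counts the `b`'s.
  by_contra! hlt
  have hcol := DFunLike.congr_fun h (some (.inr j))
  simp only [substExpHom_some_inr, if_pos hj] at hcol
  have hinr : d (.inr j) ≠ 0 := by omega
  have habove : ∀ i, j < i → (i : ℕ) < k → d (.inl i) = 0 := fun i hji hi ↦
    by_contra fun hne ↦ (hd i j hi hj hne hinr).not_gt hji
  have htot := DFunLike.congr_fun h none
  rw [substExpHom_none, substExpHom_none] at htot
  refine htot.not_lt (Finset.sum_lt_sum (fun i hi ↦ ?_) ⟨j, by simpa using hj, hlt⟩)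
  rcases lt_trichotomy i j with hij | rfl | hji
  · exact (hbelow i hij).le
  · exact hlt.le
  · simp [habove i hji (by simpa using hi)]

theorem substExpHom_injOn : Set.InjOn (substExpHom n k) {d | IsStandard n k d} := by
  intro d hd d' hd' h
  have hinl : ∀ j : Fin n, (j : ℕ) < k → d (.inl j) = d' (.inl j) := by
    intro j
    induction j using WellFoundedLT.induction with
    | _ j ih =>
      intro hj
      have ih' : ∀ i < j, d (.inl i) = d' (.inl i) := fun i hi ↦ ih i hi (by omega)
      exact le_antisymm (apply_inl_le_of_isStandard hd' h.symm hj fun i hi ↦ (ih' i hi).symm)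
        (apply_inl_le_of_isStandard hd h hj ih')
  ext (i | j)
  · by_cases hi : (i : ℕ) < k
    · exact hinl i hi
    · simpa [substExpHom_some_inl _ hi] using DFunLike.congr_fun h (some (.inl i))
  · have hcol := DFunLike.congr_fun h (some (.inr j))
    simp only [substExpHom_some_inr] at hcol
    split_ifs at hcol with hj
    · have := hinl j hj
      omega
    · simpa using hcol

theorem monomial_mem_restrictSupport_sup_span_minors (d : Fin n ⊕ Fin n →₀ ℕ) :
    monomial d (1 : R) ∈
      restrictSupport R {d | IsStandard n k d} ⊔ (Ideal.span (minors R n k)).restrictScalars R := by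
  induction hw : bWeight n d using Nat.strong_induction_on generalizing d with
  | _ w ih =>
    by_cases hd : IsStandard n k d
    · exact Submodule.mem_sup_left ((monomial_mem_restrictSupport R).2 (.inl hd))
    obtain ⟨i, j, hi, hj, hdi, hdj, hji⟩ : ∃ i j : Fin n, (i : ℕ) < k ∧ (j : ℕ) < k ∧
        d (.inl i) ≠ 0 ∧ d (.inr j) ≠ 0 ∧ j < i := by
      simpa [IsStandard] using hd
    obtain ⟨d₁, rfl⟩ := Finsupp.exists_eq_add_single_of_ne_zero hdi
    obtain ⟨d₀, rfl⟩ := Finsupp.exists_eq_add_single_of_ne_zero (a := .inr j) (d := d₁)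
      (by simpa using hdj)
    have hswap : monomial (d₀ + .single (.inr j) 1 + .single (.inl i) 1) (1 : R) =
        (X (.inl i) * X (.inr j) - X (.inl j) * X (.inr i)) * monomial d₀ 1 +
          monomial (d₀ + .single (.inr i) 1 + .single (.inl j) 1) 1 := by
      simp only [monomial_add_single, pow_one]
      ring
    rw [hswap]
    refine add_mem (Submodule.mem_sup_right ?_) (ih _ ?_ _ rfl)
    · exact Ideal.mul_mem_right _ _ (Ideal.subset_span ⟨i, j, hi, hj, rfl⟩)
    · simp [← hw, bWeight]
      omega

theorem restrictSupport_sup_span_minors_eq_top :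
    restrictSupport R {d | IsStandard n k d} ⊔ (Ideal.span (minors R n k)).restrictScalars R =
      ⊤ := by
  refine eq_top_iff.2 fun x _ ↦ ?_
  induction x using MvPolynomial.induction_on' with
  | monomial d c =>
    simpa [smul_monomial] using
      Submodule.smul_mem _ c (monomial_mem_restrictSupport_sup_span_minors d)
  | add p q hp hq => exact add_mem (hp trivial) (hq trivial)

theorem span_minors_le_ker_subst : Ideal.span (minors R n k) ≤ RingHom.ker (subst R n k) := by
  rw [Ideal.span_le]
  rintro _ ⟨i, j, hi, hj, rfl⟩
  simp only [SetLike.mem_coe, RingHom.mem_ker, map_sub, map_mul, subst_X, monomial_mul,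
    substExp, if_pos hi, if_pos hj, mul_one]
  rw [add_right_comm, sub_self]

theorem ker_subst : RingHom.ker (subst R n k) = Ideal.span (minors R n k) := by
  refine le_antisymm (fun x hx ↦ ?_) span_minors_le_ker_subst
  obtain ⟨y, hy, z, hz, rfl⟩ := Submodule.mem_sup.1
    (restrictSupport_sup_span_minors_eq_top (R := R) (k := k) ▸ Submodule.mem_top (x := x))
  have hz' : subst R n k z = 0 := span_minors_le_ker_subst hz
  have hy' : y = 0 := eq_zero_of_mapDomain_eq_zero substExpHom_injOn hy <| by
    rwa [RingHom.mem_ker, map_add, hz', add_zero] at hx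
  simpa [hy'] using hz

theorem mem_span_minors_of_X_inr_pow_mul_mem (j : Fin n) {x : MvPolynomial (Fin n ⊕ Fin n) R}
    {e : ℕ} (hx : X (.inr j) ^ e * x ∈ Ideal.span (minors R n k)) :
    x ∈ Ideal.span (minors R n k) := by
  rw [← ker_subst, RingHom.mem_ker, map_mul, map_pow, subst_X] at hx
  rw [← ker_subst, RingHom.mem_ker]
  exact (isRegular_X_pow e).left (hx.trans (mul_zero _).symm)

end GenericMinors

open GenericMinors in
/-- the key saturation step in the proof of Corollary `c:genericb`:
in `R = R₀[b₁, …, b_n, b′₁, …, b′_n]` (realized as `MvPolynomial (Fin n ⊕ Fin n) R₀`,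
with `b_i = X (inl i)` and `b′_i = X (inr i)`), the ideal `J_k` of `2×2` minors
`r_{ij} = b_i b′_j − b_j b′_i` for `i, j ≤ k` is saturated with respect to `b′₁`:
if `(b′₁)^e · x ∈ J_k` then `x ∈ J_k`.  (The paper's indices `1, …, k` correspond to the
indices `i` of `Fin n` with `(i : ℕ) < k`, and `b′₁` to `X (inr ⟨0, _⟩)`.) -/
theorem stmt12 {R₀ : Type*} [CommRing R₀] (n k : ℕ) (hk : 2 ≤ k) (hkn : k ≤ n)
    (x : MvPolynomial (Fin n ⊕ Fin n) R₀) (e : ℕ)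
    (hx : (X (Sum.inr (⟨0, by omega⟩ : Fin n))) ^ e * x ∈
      Ideal.span {y : MvPolynomial (Fin n ⊕ Fin n) R₀ |
        ∃ i j : Fin n, (i : ℕ) < k ∧ (j : ℕ) < k ∧
          y = X (Sum.inl i) * X (Sum.inr j) - X (Sum.inl j) * X (Sum.inr i)}) :
    x ∈ Ideal.span {y : MvPolynomial (Fin n ⊕ Fin n) R₀ |
      ∃ i j : Fin n, (i : ℕ) < k ∧ (j : ℕ) < k ∧
        y = X (Sum.inl i) * X (Sum.inr j) - X (Sum.inl j) * X (Sum.inr i)} :=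
  mem_span_minors_of_X_inr_pow_mul_mem (k := k) _ hx
end

section
/- Let R₀ be a commutative ring, m ≤ n positive integers, R = R₀[{A_{ij}}_{1≤i≤m, 1≤j≤n}] the polynomial ring over R₀ in the mn variables A_{ij}, and S = R[X₁, …, X_n]. Let c₁, …, c_m ∈ R be arbitrary, and define L_i = (∑_{j=1}^n A_{ij}·X_j) − c_i ∈ S. Then L₁, …, L_m is a regular sequence in S: for each i = 1, …, m, the image of L_i in S/(L₁, …, L_{i−1}) is a non-zero-divisor. -/
/-!
Transport everything to `R₀[X, A]` and use a monomial order that compares the degree in the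
`X` variables first and then the number of diagonal variables `A_{ii}`. The constants `c_i`
have `X`-degree `0`, so the leading monomial of `L_i` is `A_{ii} X_i`, with coefficient `1`,
and these leading monomials are pairwise coprime. Buchberger's first criterion makes
`L_1, …, L_{i-1}` a Gröbner basis. If `f L_i` lies in the ideal they span, reduce `f` modulo
this basis to `r`; then `r L_i` lies in the ideal too, so its leading monomial
`lm(r) A_{ii} X_i` is divisible by some `A_{jj} X_j`, hence by coprimality so is `lm(r)`,
which is impossible unless `r = 0`.
-/

open MvPolynomial Function
open scoped MonomialOrder

theorem Finsupp.le_of_disjoint_of_le_add {σ : Type*} {a b c : σ →₀ ℕ} (h : Disjoint a c)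
    (hle : a ≤ b + c) : a ≤ b := by
  intro s
  have hs := DFunLike.congr_fun (_root_.disjoint_iff.mp h) s
  have hles := hle s
  simp only [Finsupp.inf_apply, Finsupp.add_apply, bot_eq_zero, Finsupp.coe_zero,
    Pi.zero_apply] at hs hles
  omega

theorem Finsupp.weight_mapDomain {σ τ : Type*} (f : σ → τ) (w : τ → ℕ) (d : σ →₀ ℕ) :
    weight w (mapDomain f d) = weight (w ∘ f) d := by
  simp only [weight_apply]
  rw [sum_mapDomain_index (by simp) (fun _ _ _ => add_smul ..)]
  rfl

theorem Ideal.Quotient.mk_map_mem_nonZeroDivisors {A B : Type*} [CommRing A] [CommRing B]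
    (e : A ≃+* B) {I : Ideal A} {x : A} (hx : mk I x ∈ nonZeroDivisors (A ⧸ I)) :
    mk (I.map e) (e x) ∈ nonZeroDivisors (B ⧸ I.map e) := by
  rw [← MulEquivClass.map_nonZeroDivisors (Ideal.quotientEquiv I (I.map e) e rfl)]
  exact ⟨_, hx, Ideal.quotientEquiv_mk ..⟩

namespace MonomialOrder

variable {σ : Type*}

noncomputable def toWeightedSyn (w : σ → ℕ) (m : MonomialOrder σ) :
    (σ →₀ ℕ) →+ ℕ ×ₗ m.syn where
  toFun d := toLex (Finsupp.weight w d, m.toSyn d)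
  map_zero' := by simp
  map_add' a b := by simp [← toLex_add]

theorem toWeightedSyn_injective (w : σ → ℕ) (m : MonomialOrder σ) :
    Function.Injective (toWeightedSyn w m) :=
  fun _ _ h => m.toSyn.injective (congrArg (·.2) h)

noncomputable def weighted (w : σ → ℕ) (m : MonomialOrder σ) : MonomialOrder σ where
  syn := AddMonoidHom.mrange (toWeightedSyn w m)
  addCommMonoidSyn := inferInstance
  linearOrderSyn := inferInstance
  isOrderedAddMonoid_syn := inferInstance
  wellFoundedLT_syn := inferInstance
  toSyn := AddEquiv.ofBijective (toWeightedSyn w m).mrangeRestrict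
    ⟨fun _ _ h => toWeightedSyn_injective w m (congrArg Subtype.val h),
      (toWeightedSyn w m).mrangeRestrict_surjective⟩
  toSyn_monotone a b hab := by
    show toWeightedSyn w m a ≤ toWeightedSyn w m b
    obtain ⟨c, rfl⟩ := exists_add_of_le hab
    refine Prod.Lex.toLex_mono ⟨?_, m.toSyn_monotone hab⟩
    simp

theorem weighted_lt_iff (w : σ → ℕ) (m : MonomialOrder σ) {a b : σ →₀ ℕ} :
    a ≺[m.weighted w] b ↔ Finsupp.weight w a < Finsupp.weight w b ∨
      Finsupp.weight w a = Finsupp.weight w b ∧ a ≺[m] b :=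
  Prod.Lex.toLex_lt_toLex

noncomputable def lexOfFintype (σ : Type*) [Fintype σ] : MonomialOrder σ :=
  letI : LinearOrder σ := LinearOrder.lift' _ (Fintype.equivFin σ).injective
  lex

variable {R : Type*} [CommRing R] (m : MonomialOrder σ)

def IsGroebnerBasis (B : Set (MvPolynomial σ R)) : Prop :=
  ∀ f ∈ Ideal.span B, f ≠ 0 → ∃ b ∈ B, m.degree b ≤ m.degree f

variable {m} {B : Set (MvPolynomial σ R)}

theorem exists_sub_mem_span_forall_not_degree_le (hB : ∀ b ∈ B, IsUnit (m.leadingCoeff b))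
    (f : MvPolynomial σ R) :
    ∃ r, f - r ∈ Ideal.span B ∧ ∀ c ∈ r.support, ∀ b ∈ B, ¬ m.degree b ≤ c := by
  obtain ⟨g, r, rfl, -, hr⟩ := m.div_set hB f
  refine ⟨r, ?_, hr⟩
  rw [add_sub_cancel_right]
  simpa [Finsupp.range_linearCombination] using
    LinearMap.mem_range_self (Finsupp.linearCombination _ ((↑) : B → MvPolynomial σ R)) g

theorem not_degree_le_degree_mul {r Q : MvPolynomial σ R} (hr : r ≠ 0)
    (hrB : ∀ c ∈ r.support, ∀ b ∈ B, ¬ m.degree b ≤ c) (hQ : IsUnit (m.leadingCoeff Q))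
    (hBQ : ∀ b ∈ B, Disjoint (m.degree b) (m.degree Q)) {b : MvPolynomial σ R} (hb : b ∈ B) :
    ¬ m.degree b ≤ m.degree (r * Q) := by
  rw [degree_mul_of_isRegular_right hr hQ.isRegular]
  exact fun hle => hrB _ (m.degree_mem_support hr) b hb
    (Finsupp.le_of_disjoint_of_le_add (hBQ b hb) hle)

theorem IsGroebnerBasis.mem_span_of_mul_mem_span (hB : m.IsGroebnerBasis B)
    (hBu : ∀ b ∈ B, IsUnit (m.leadingCoeff b)) {Q : MvPolynomial σ R}
    (hQ : IsUnit (m.leadingCoeff Q)) (hBQ : ∀ b ∈ B, Disjoint (m.degree b) (m.degree Q))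
    {f : MvPolynomial σ R} (hf : f * Q ∈ Ideal.span B) : f ∈ Ideal.span B := by
  obtain ⟨r, hfr, hr⟩ := exists_sub_mem_span_forall_not_degree_le hBu f
  obtain rfl | hr0 := eq_or_ne r 0
  · simpa using hfr
  have hrQ : r * Q ∈ Ideal.span B := by
    simpa [← sub_mul] using sub_mem hf (Ideal.mul_mem_right Q _ hfr)
  have hQ' := m.mem_nonZeroDivisors_of_leadingCoeff_mem_nonZeroDivisors hQ.mem_nonZeroDivisors
  obtain ⟨b, hb, hle⟩ := hB _ hrQ fun h0 => hr0 (mem_nonZeroDivisors_iff_right.mp hQ' r h0)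
  exact absurd hle (not_degree_le_degree_mul hr0 hr hQ hBQ hb)

theorem IsGroebnerBasis.insert (hB : m.IsGroebnerBasis B)
    (hBu : ∀ b ∈ B, IsUnit (m.leadingCoeff b)) {Q : MvPolynomial σ R}
    (hQ : IsUnit (m.leadingCoeff Q)) (hBQ : ∀ b ∈ B, Disjoint (m.degree b) (m.degree Q)) :
    m.IsGroebnerBasis (insert Q B) := by
  intro f hf hf0
  obtain ⟨a, h, hh, rfl⟩ := Ideal.mem_span_insert.mp hf
  obtain ⟨r, har, hr⟩ := exists_sub_mem_span_forall_not_degree_le hBu a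
  obtain ⟨h', hh', hf⟩ : ∃ h' ∈ Ideal.span B, a * Q + h = r * Q + h' :=
    ⟨_, add_mem (Ideal.mul_mem_right Q _ har) hh, by ring⟩
  rw [hf] at hf0 ⊢
  obtain rfl | hr0 := eq_or_ne r 0
  · rw [zero_mul, zero_add] at hf0 ⊢
    obtain ⟨b, hb, hle⟩ := hB h' hh' hf0
    exact ⟨b, Set.mem_insert_of_mem _ hb, hle⟩
  have hQle : m.degree Q ≤ m.degree (r * Q) := by
    rw [degree_mul_of_isRegular_right hr0 hQ.isRegular]
    exact le_add_self
  obtain rfl | hh0 := eq_or_ne h' 0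
  · exact ⟨Q, Set.mem_insert _ _, by simpa using hQle⟩
  obtain ⟨b, hb, hle⟩ := hB h' hh' hh0
  have hne : m.degree (r * Q) ≠ m.degree h' := fun heq =>
    not_degree_le_degree_mul hr0 hr hQ hBQ hb (heq ▸ hle)
  rcases max_choice (m.toSyn (m.degree (r * Q))) (m.toSyn (m.degree h')) with hmax | hmax <;>
    rw [← degree_add_of_ne hne, m.toSyn.injective.eq_iff] at hmax <;> rw [hmax]
  · exact ⟨Q, Set.mem_insert _ _, hQle⟩
  · exact ⟨b, Set.mem_insert_of_mem _ hb, hle⟩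

theorem isGroebnerBasis_empty : m.IsGroebnerBasis (∅ : Set (MvPolynomial σ R)) := by
  intro f hf hf0
  simp_all

/-- Buchberger's first criterion. -/
theorem isGroebnerBasis_of_pairwise_disjoint (hBu : ∀ b ∈ B, IsUnit (m.leadingCoeff b))
    (hB : B.Pairwise (Disjoint on m.degree)) : m.IsGroebnerBasis B := by
  classical
  have key (T : Finset (MvPolynomial σ R)) (hTB : ↑T ⊆ B) :
      m.IsGroebnerBasis (T : Set (MvPolynomial σ R)) := by
    induction T using Finset.induction_on with
    | empty => simpa using isGroebnerBasis_empty
    | insert Q T hQT ih =>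
      rw [Finset.coe_insert] at hTB ⊢
      have hTB' := (Set.subset_insert _ _).trans hTB
      refine (ih hTB').insert (fun b hb => hBu b (hTB' hb)) (hBu Q (hTB (Set.mem_insert _ _)))
        fun b hb => hB (hTB' hb) (hTB (Set.mem_insert _ _)) ?_
      rintro rfl
      exact hQT hb
  intro f hf hf0
  obtain ⟨T, hTB, hfT⟩ := Submodule.mem_span_finite_of_mem_span hf
  obtain ⟨b, hb, hle⟩ := key T hTB f hfT hf0
  exact ⟨b, hTB hb, hle⟩

theorem mk_mem_nonZeroDivisors_of_pairwise_disjoint (hBu : ∀ b ∈ B, IsUnit (m.leadingCoeff b))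
    (hB : B.Pairwise (Disjoint on m.degree)) {Q : MvPolynomial σ R}
    (hQ : IsUnit (m.leadingCoeff Q)) (hBQ : ∀ b ∈ B, Disjoint (m.degree b) (m.degree Q)) :
    Ideal.Quotient.mk (Ideal.span B) Q ∈ nonZeroDivisors (MvPolynomial σ R ⧸ Ideal.span B) := by
  rw [mem_nonZeroDivisors_iff_right]
  intro x hx
  obtain ⟨f, rfl⟩ := Ideal.Quotient.mk_surjective x
  rw [← map_mul, Ideal.Quotient.eq_zero_iff_mem] at hx
  rw [Ideal.Quotient.eq_zero_iff_mem]
  exact (isGroebnerBasis_of_pairwise_disjoint hBu hB).mem_span_of_mul_mem_span hBu hQ hBQ hx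

end MonomialOrder

namespace GenericLinearForms

open Finsupp Sum

variable {R₀ : Type*} [CommRing R₀] {m n : ℕ}

-- `inl l` is the variable `X_l` and `inr (i, l)` is `A_{il}`.
def xWeight : Fin n ⊕ (Fin m × Fin n) → ℕ := Sum.elim 1 0

def diagWeight : Fin n ⊕ (Fin m × Fin n) → ℕ :=
  Sum.elim 0 fun il => if (il.2 : ℕ) = il.1 then 1 else 0

noncomputable def linearFormOrder : MonomialOrder (Fin n ⊕ (Fin m × Fin n)) :=
  ((MonomialOrder.lexOfFintype _).weighted diagWeight).weighted xWeight

noncomputable def exponent (i : Fin m) (l : Fin n) : Fin n ⊕ (Fin m × Fin n) →₀ ℕ :=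
  single (inr (i, l)) 1 + single (inl l) 1

noncomputable def linearForm (c : MvPolynomial (Fin m × Fin n) R₀) (i : Fin m) :
    MvPolynomial (Fin n ⊕ (Fin m × Fin n)) R₀ :=
  ∑ l, X (inr (i, l)) * X (inl l) - rename inr c

theorem X_mul_X_eq_monomial_exponent (i : Fin m) (l : Fin n) :
    (X (inr (i, l)) * X (inl l) : MvPolynomial (Fin n ⊕ (Fin m × Fin n)) R₀) =
      monomial (exponent i l) 1 := by
  simp [X, monomial_mul, exponent]

theorem sumAlgEquiv_linearForm (c : MvPolynomial (Fin m × Fin n) R₀) (i : Fin m) :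
    sumAlgEquiv R₀ (Fin n) (Fin m × Fin n) (linearForm c i) = ∑ l, C (X (i, l)) * X l - C c := by
  have hc : sumAlgEquiv R₀ (Fin n) (Fin m × Fin n) (rename inr c) = C c :=
    AlgHom.congr_fun (sumAlgEquiv_comp_rename_inr R₀ (Fin n) (Fin m × Fin n)) c
  simp [linearForm, hc, mul_comm]

theorem weight_xWeight_exponent (i : Fin m) (l : Fin n) : weight xWeight (exponent i l) = 1 := by
  simp [exponent, weight_single, xWeight]

theorem weight_diagWeight_exponent (i : Fin m) (l : Fin n) :
    weight diagWeight (exponent i l) = if (l : ℕ) = i then 1 else 0 := by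
  simp [exponent, weight_single, diagWeight]

theorem weight_xWeight_mapDomain_inr (d : Fin m × Fin n →₀ ℕ) :
    weight xWeight (mapDomain inr d) = 0 := by
  rw [weight_mapDomain, xWeight, Sum.elim_comp_inr]
  simp [weight_apply]

theorem exponent_lt_exponent {i : Fin m} {l d : Fin n} (hl : (l : ℕ) ≠ i) (hd : (d : ℕ) = i) :
    exponent i l ≺[linearFormOrder] exponent i d := by
  rw [linearFormOrder, MonomialOrder.weighted_lt_iff, MonomialOrder.weighted_lt_iff]
  simp [weight_xWeight_exponent, weight_diagWeight_exponent, hl, hd]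

theorem mapDomain_inr_lt_exponent (a : Fin m × Fin n →₀ ℕ) (i : Fin m) (l : Fin n) :
    mapDomain inr a ≺[linearFormOrder] exponent i l := by
  rw [linearFormOrder, MonomialOrder.weighted_lt_iff]
  simp [weight_xWeight_exponent, weight_xWeight_mapDomain_inr]

theorem linearForm_eq_monomial_add (c : MvPolynomial (Fin m × Fin n) R₀) (i : Fin m) (d : Fin n) :
    linearForm c i = monomial (exponent i d) 1 +
      (∑ l ∈ Finset.univ.erase d, monomial (exponent i l) 1 - rename inr c) := by
  rw [linearForm, ← Finset.add_sum_erase _ _ (Finset.mem_univ d)]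
  simp only [X_mul_X_eq_monomial_exponent]
  ring

theorem degree_sub_lt_exponent (c : MvPolynomial (Fin m × Fin n) R₀) {i : Fin m} {d : Fin n}
    (hd : (d : ℕ) = i) :
    linearFormOrder.degree (∑ l ∈ Finset.univ.erase d, monomial (exponent i l) (1 : R₀) -
      rename inr c) ≺[linearFormOrder] exponent i d := by
  rw [MonomialOrder.degree_lt_iff (by simpa using mapDomain_inr_lt_exponent 0 i d)]
  intro a ha
  rcases Finset.mem_union.mp (support_sub _ _ _ ha) with ha | ha
  · obtain ⟨l, hl, ha⟩ := Finset.mem_biUnion.mp (support_sum ha)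
    rw [Finset.mem_singleton.mp (support_monomial_subset ha)]
    exact exponent_lt_exponent (fun h => Finset.ne_of_mem_erase hl (Fin.ext (h.trans hd.symm))) hd
  · classical
    rw [support_rename_of_injective inr_injective] at ha
    obtain ⟨a, -, rfl⟩ := Finset.mem_image.mp ha
    exact mapDomain_inr_lt_exponent a i d

theorem degree_monomial_exponent [Nontrivial R₀] (i : Fin m) (l : Fin n) :
    linearFormOrder.degree (monomial (exponent i l) (1 : R₀)) = exponent i l := by
  classical
  rw [MonomialOrder.degree_monomial, if_neg one_ne_zero]

theorem monic_linearForm (hmn : m ≤ n) (c : MvPolynomial (Fin m × Fin n) R₀) (i : Fin m) :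
    linearFormOrder.Monic (linearForm c i) := by
  nontriviality R₀
  rw [linearForm_eq_monomial_add c i (Fin.castLE hmn i)]
  refine MonomialOrder.monic_monomial_one.add_of_lt ?_
  rw [degree_monomial_exponent]
  exact degree_sub_lt_exponent c rfl

theorem degree_linearForm [Nontrivial R₀] (hmn : m ≤ n) (c : MvPolynomial (Fin m × Fin n) R₀)
    (i : Fin m) : linearFormOrder.degree (linearForm c i) = exponent i (Fin.castLE hmn i) := by
  have htail := degree_sub_lt_exponent (R₀ := R₀) c (d := Fin.castLE hmn i) rfl
  rw [← degree_monomial_exponent (R₀ := R₀)] at htail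
  rw [linearForm_eq_monomial_add c i (Fin.castLE hmn i), MonomialOrder.degree_add_of_lt htail,
    degree_monomial_exponent]

theorem disjoint_exponent (hmn : m ≤ n) {i j : Fin m} (hij : i ≠ j) :
    Disjoint (exponent i (Fin.castLE hmn i)) (exponent j (Fin.castLE hmn j)) := by
  rw [_root_.disjoint_iff, bot_eq_zero]
  have := Fin.val_ne_of_ne hij
  ext (l | ⟨k, l⟩) <;> simp [exponent, single_apply, Fin.ext_iff] <;> omega

theorem disjoint_degree_linearForm (hmn : m ≤ n) (c c' : MvPolynomial (Fin m × Fin n) R₀)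
    {i j : Fin m} (hij : i ≠ j) :
    Disjoint (linearFormOrder.degree (linearForm c i))
      (linearFormOrder.degree (linearForm c' j)) := by
  rcases subsingleton_or_nontrivial R₀ with _ | _
  · simp [MonomialOrder.degree_subsingleton, ← bot_eq_zero]
  · rw [degree_linearForm hmn, degree_linearForm hmn]
    exact disjoint_exponent hmn hij

end GenericLinearForms

theorem stmt13_general {R₀ : Type*} [CommRing R₀] (m n : ℕ)
    (hmn : m ≤ n)
    (c : Fin m → MvPolynomial (Fin m × Fin n) R₀) :
    ∀ i : Fin m,
      Ideal.Quotient.mk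
        (Ideal.span {p : MvPolynomial (Fin n) (MvPolynomial (Fin m × Fin n) R₀) |
          ∃ j : Fin m, j < i ∧
            p = (∑ l : Fin n, C (X (j, l)) * X l) - C (c j)})
        ((∑ l : Fin n, C (X (i, l)) * X l) - C (c i))
      ∈ nonZeroDivisors _ := by
  open GenericLinearForms in
  intro i
  let e := (sumAlgEquiv R₀ (Fin n) (Fin m × Fin n)).toRingEquiv
  have hL (j : Fin m) : (∑ l : Fin n, C (X (j, l)) * X l) - C (c j) = e (linearForm (c j) j) :=
    (sumAlgEquiv_linearForm (c j) j).symm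
  have hspan : {p | ∃ j : Fin m, j < i ∧ p = (∑ l : Fin n, C (X (j, l)) * X l) - C (c j)} =
      e '' ((fun j => linearForm (c j) j) '' Set.Iio i) := by
    ext p
    simp [hL, eq_comm]
  rw [hspan, ← Ideal.map_span, hL]
  have hunit (j : Fin m) : IsUnit (linearFormOrder.leadingCoeff (linearForm (c j) j)) :=
    (monic_linearForm hmn (c j) j).leadingCoeff_eq_one ▸ isUnit_one
  refine Ideal.Quotient.mk_map_mem_nonZeroDivisors e
    (MonomialOrder.mk_mem_nonZeroDivisors_of_pairwise_disjoint ?_ ?_ (hunit i) ?_)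
  · rintro _ ⟨j, -, rfl⟩
    exact hunit j
  · exact Set.Pairwise.image fun j _ k _ hjk => disjoint_degree_linearForm hmn _ _ hjk
  · rintro _ ⟨j, hj, rfl⟩
    exact disjoint_degree_linearForm hmn _ _ (ne_of_lt hj)

/-- Proposition `p:regular-seq-inhomog`: over
`R = R₀[{A_{ij}}]` (realized as `MvPolynomial (Fin m × Fin n) R₀`) and
`S = R[X₁, …, X_n]` (realized as `MvPolynomial (Fin n) R`), the inhomogeneous generic
linear polynomials `L_i = ∑_j A_{ij} X_j − c_i` (with arbitrary constants `c_i ∈ R`)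
form a regular sequence when `m ≤ n`: the image of each `L_i` in
`S/(L₁, …, L_{i−1})` is a non-zero-divisor. -/
theorem stmt13 {R₀ : Type*} [CommRing R₀] (m n : ℕ) (hm : 0 < m) (hn : 0 < n)
    (hmn : m ≤ n)
    (c : Fin m → MvPolynomial (Fin m × Fin n) R₀) :
    ∀ i : Fin m,
      Ideal.Quotient.mk
        (Ideal.span {p : MvPolynomial (Fin n) (MvPolynomial (Fin m × Fin n) R₀) |
          ∃ j : Fin m, j < i ∧
            p = (∑ l : Fin n, C (X (j, l)) * X l) - C (c j)})
        ((∑ l : Fin n, C (X (i, l)) * X l) - C (c i))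
      ∈ nonZeroDivisors _ :=
  stmt13_general m n hmn c
end

section
/- Let R₀ be a commutative ring, m ≤ n positive integers, R = R₀[{A_{ij}}_{1≤i≤m, 1≤j≤n}], S = R[X₁, …, X_n], c₁, …, c_m ∈ R, and L_i = (∑_{j=1}^n A_{ij}·X_j) − c_i ∈ S. Then the images of L₁, …, L_m in the localization S[A₁₁⁻¹] (the localization of S at the powers of A₁₁) form a regular sequence: for each i = 1, …, m, the image of L_i in S[A₁₁⁻¹]/(L₁, …, L_{i−1}) is a non-zero-divisor. -/
/-!
Grade `S = R[X₁, …, Xₙ]` by `deg Xₗ = 1`, `deg A_{jl} = 0`, so that `Lⱼ = ℓⱼ - cⱼ` with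
`ℓⱼ = ∑ₗ A_{jl} Xₗ` linear and `cⱼ` of degree `0`. Each `ℓⱼ` is regular modulo any fewer than `n`
of the others: `ℓⱼ = X_p A_{jp} + (terms free of A_{jp})` and `A_{jp}` occurs in no other generator,
so `ℓⱼ` is regular as soon as `X_p` is, and an `X_p` is regular modulo some `ℓ_k` and `X_l` by
exchanging it with the `ℓ_k` one at a time, at the cost of one more unused variable each time.
A degree induction shows that the top-degree forms of the ideal `(L_k)_{k ∈ D}` lie in
`(ℓ_k)_{k ∈ D}`, which carries the regularity of `ℓᵢ` over to `Lᵢ`. So the `Lᵢ` already form a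
regular sequence in `S`, and localizing at `A₁₁` preserves this.
-/

open MvPolynomial
open scoped nonZeroDivisors

def IsRegularMod {P : Type*} [CommRing P] (J : Ideal P) (x : P) : Prop :=
  ∀ v, x * v ∈ J → v ∈ J

namespace IsRegularMod

variable {P Q : Type*} [CommRing P] [CommRing Q] {J : Ideal P} {x : P}

theorem one (J : Ideal P) : IsRegularMod J 1 := fun v hv => by rwa [one_mul] at hv

theorem mk_mem_nonZeroDivisors_iff :
    Ideal.Quotient.mk J x ∈ (P ⧸ J)⁰ ↔ IsRegularMod J x := by
  rw [mem_nonZeroDivisors_iff_left]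
  refine ⟨fun h v hv => ?_, fun h v hv => ?_⟩
  · rw [← Ideal.Quotient.eq_zero_iff_mem] at hv ⊢
    exact h _ (by rwa [map_mul] at hv)
  · obtain ⟨v, rfl⟩ := Ideal.Quotient.mk_surjective v
    rw [← map_mul, Ideal.Quotient.eq_zero_iff_mem] at hv
    exact Ideal.Quotient.eq_zero_iff_mem.2 (h v hv)

theorem swap {w : P} (hx : IsRegularMod J x) (hw : IsRegularMod (J ⊔ Ideal.span {x}) w) :
    IsRegularMod (J ⊔ Ideal.span {w}) x := by
  intro u hu
  obtain ⟨j, hj, _, hz, hjz⟩ := Submodule.mem_sup.1 hu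
  obtain ⟨r, rfl⟩ := Ideal.mem_span_singleton'.1 hz
  have hwr : w * r ∈ J ⊔ Ideal.span {x} := by
    rw [show w * r = x * u - j by linear_combination hjz]
    exact Submodule.sub_mem _
      (Submodule.mem_sup_right (Ideal.mem_span_singleton'.2 ⟨u, mul_comm _ _⟩))
      (Submodule.mem_sup_left hj)
  obtain ⟨j', hj', _, hz', hjz'⟩ := Submodule.mem_sup.1 (hw r hwr)
  obtain ⟨s, rfl⟩ := Ideal.mem_span_singleton'.1 hz'
  have hxu : x * (u - s * w) ∈ J := by
    rw [show x * (u - s * w) = j + j' * w by linear_combination -hjz - w * hjz']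
    exact J.add_mem hj (J.mul_mem_right _ hj')
  rw [show u = (u - s * w) + s * w by ring]
  exact Submodule.add_mem _ (Submodule.mem_sup_left (hx _ hxu))
    (Submodule.mem_sup_right (Ideal.mem_span_singleton'.2 ⟨s, rfl⟩))

theorem map_ringEquiv_iff (e : P ≃+* Q) : IsRegularMod (J.map e) (e x) ↔ IsRegularMod J x := by
  rw [← Ideal.comap_symm]
  refine ⟨fun h v hv => ?_, fun h v hv => ?_⟩
  · have := h (e v)
    simp only [Ideal.mem_comap, map_mul, RingEquiv.symm_apply_apply] at this
    exact this hv
  · simp only [Ideal.mem_comap, map_mul, RingEquiv.symm_apply_apply] at hv ⊢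
    exact h _ hv

theorem map_algebraMap {S : Type*} [CommRing S] [Algebra P S] (M : Submonoid P)
    [IsLocalization M S] (h : IsRegularMod J x) :
    IsRegularMod (J.map (algebraMap P S)) (algebraMap P S x) := by
  intro v hv
  obtain ⟨⟨a, s⟩, rfl⟩ := IsLocalization.mk'_surjective M v
  rw [IsLocalization.mul_mk'_eq_mk'_of_mul, IsLocalization.mk'_mem_map_algebraMap_iff] at hv
  obtain ⟨t, ht, hxa⟩ := hv
  exact (IsLocalization.mk'_mem_map_algebraMap_iff M S J a s).2
    ⟨t, ht, h _ (by rwa [mul_left_comm])⟩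

end IsRegularMod

open Polynomial in
theorem Polynomial.isRegularMod_C_mul_X_add_C {B : Type*} [CommRing B] {I : Ideal B} {x : B}
    (hx : IsRegularMod I x) (g : B) :
    IsRegularMod (I.map C) (C x * X + C g) := by
  have hreg : C (Ideal.Quotient.mk I x) * X + C (Ideal.Quotient.mk I g) ∈ (B ⧸ I)[X]⁰ := by
    refine Polynomial.mem_nonZeroDivisors_iff.2 fun a ha => ?_
    obtain ⟨a, rfl⟩ := Ideal.Quotient.mk_surjective a
    have hax := congr_arg (coeff · 1) ha
    simp only [coeff_smul, coeff_add, coeff_C_mul_X, coeff_C, if_true, one_ne_zero, if_false,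
      add_zero, smul_eq_mul, ← map_mul, mul_comm a] at hax
    exact Ideal.Quotient.eq_zero_iff_mem.2 (hx a (Ideal.Quotient.eq_zero_iff_mem.1 hax))
  intro u hu
  rw [← Ideal.mk_ker (I := I), ← Polynomial.ker_mapRingHom, RingHom.mem_ker] at hu ⊢
  rw [map_mul] at hu
  exact (mem_nonZeroDivisors_iff_left.1 hreg) _ (by simpa using hu)

namespace MvPolynomial

section FreshVariable

variable {R σ : Type*} [CommRing R]

theorem X_mem_supported_of_mem {s : Set σ} {i : σ} (h : i ∈ s) : X i ∈ supported R s :=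
  Algebra.subset_adjoin ⟨i, h, rfl⟩

variable [DecidableEq σ] in
noncomputable def equivPolynomialAt (s₀ : σ) :
    MvPolynomial σ R ≃ₐ[R] Polynomial (MvPolynomial {s // s ≠ s₀} R) :=
  (renameEquiv R (Equiv.optionSubtypeNe s₀).symm).trans (optionEquivLeft R _)

theorem equivPolynomialAt_X_self [DecidableEq σ] (s₀ : σ) :
    equivPolynomialAt (R := R) s₀ (X s₀) = Polynomial.X := by
  simp [equivPolynomialAt]

theorem equivPolynomialAt_mem_range_C [DecidableEq σ] {s₀ : σ} {p : MvPolynomial σ R}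
    (hp : p ∈ supported R {s₀}ᶜ) : equivPolynomialAt s₀ p ∈ Set.range Polynomial.C := by
  rw [supported_eq_range_rename] at hp
  obtain ⟨q, rfl⟩ := hp
  refine ⟨rename (fun s => ⟨s.1, s.2⟩) q, ?_⟩
  induction q using MvPolynomial.induction_on with
  | C a => simp [equivPolynomialAt, optionEquivLeft_C]
  | add p q hp hq => simp only [map_add, hp, hq]
  | mul_X p s hp =>
    simp only [map_mul, hp, rename_X]
    simp [equivPolynomialAt, Equiv.optionSubtypeNe_symm_of_ne s.2, optionEquivLeft_X_some]

theorem isRegularMod_mul_X_add {s₀ : σ} {G : Set (MvPolynomial σ R)} {x g : MvPolynomial σ R}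
    (hG : G ⊆ supported R {s₀}ᶜ) (hx : x ∈ supported R {s₀}ᶜ) (hg : g ∈ supported R {s₀}ᶜ)
    (hreg : IsRegularMod (Ideal.span G) x) : IsRegularMod (Ideal.span G) (x * X s₀ + g) := by
  classical
  let E := (equivPolynomialAt (R := R) s₀).toRingEquiv
  obtain ⟨x', hx'⟩ := equivPolynomialAt_mem_range_C hx
  obtain ⟨g', hg'⟩ := equivPolynomialAt_mem_range_C hg
  set I := Ideal.span (Polynomial.C ⁻¹' (E '' G))
  have hmap : (Ideal.span G).map E = I.map Polynomial.C := by
    rw [Ideal.map_span, Ideal.map_span, Set.image_preimage_eq_of_subset]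
    rintro _ ⟨p, hp, rfl⟩
    exact equivPolynomialAt_mem_range_C (hG hp)
  rw [← IsRegularMod.map_ringEquiv_iff E, hmap] at hreg ⊢
  have hx'I : IsRegularMod I x' := fun b hb => by
    have := hreg (Polynomial.C b) (by
      rw [show E x = Polynomial.C x' from hx'.symm, ← map_mul]
      exact Ideal.mem_map_of_mem _ hb)
    simpa using Ideal.mem_map_C_iff.1 this 0
  have hE : E (x * X s₀ + g) = Polynomial.C x' * Polynomial.X + Polynomial.C g' := by
    simp [E, hx', hg', equivPolynomialAt_X_self]
  rw [hE]
  exact Polynomial.isRegularMod_C_mul_X_add_C hx'I g'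

end FreshVariable

section TopDegreeForms

variable {σ R ι : Type*} [CommRing R]

section

attribute [local instance] MvPolynomial.gradedAlgebra

theorem homogeneousComponent_succ_mul_of_isHomogeneous_one {ℓ : MvPolynomial σ R}
    (hℓ : ℓ.IsHomogeneous 1) (e : ℕ) (p : MvPolynomial σ R) :
    homogeneousComponent (e + 1) (p * ℓ) = homogeneousComponent e p * ℓ := by
  simpa [← decomposition.decompose'_apply] using
    DirectSum.coe_decompose_mul_of_right_mem (homogeneousSubmodule σ R) (e + 1) (a := p) hℓ

theorem homogeneousComponent_zero_mul_of_isHomogeneous_one {ℓ : MvPolynomial σ R}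
    (hℓ : ℓ.IsHomogeneous 1) (p : MvPolynomial σ R) :
    homogeneousComponent 0 (p * ℓ) = 0 := by
  simpa [← decomposition.decompose'_apply] using
    DirectSum.coe_decompose_mul_of_right_mem (homogeneousSubmodule σ R) 0 (a := p) hℓ

end

theorem homogeneousComponent_succ_mul_sub_C {ℓ p : MvPolynomial σ R} (hℓ : ℓ.IsHomogeneous 1)
    {e : ℕ} (hp : p.totalDegree ≤ e) (r : R) :
    homogeneousComponent (e + 1) (p * (ℓ - C r)) = homogeneousComponent e p * ℓ := by
  rw [mul_sub, map_sub, homogeneousComponent_succ_mul_of_isHomogeneous_one hℓ, mul_comm p,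
    homogeneousComponent_C_mul, homogeneousComponent_eq_zero (e + 1) p (by omega), mul_zero,
    sub_zero]

theorem totalDegree_mul_sub_C_le {ℓ : MvPolynomial σ R} (hℓ : ℓ.IsHomogeneous 1)
    (p : MvPolynomial σ R) (r : R) : (p * (ℓ - C r)).totalDegree ≤ p.totalDegree + 1 :=
  (totalDegree_mul _ _).trans (by grw [totalDegree_sub_C_le, hℓ.totalDegree_le])

theorem totalDegree_sub_homogeneousComponent_le {w : MvPolynomial σ R} {e : ℕ}
    (hw : w.totalDegree ≤ e + 1) : (w - homogeneousComponent (e + 1) w).totalDegree ≤ e := by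
  refine Finset.sup_le fun d hd => ?_
  rw [mem_support_iff, coeff_sub, coeff_homogeneousComponent] at hd
  have hdw : d.degree ≤ e + 1 :=
    (le_totalDegree (s := d) (by rw [mem_support_iff]; aesop)).trans hw
  have : d.degree ≠ e + 1 := fun h => hd (by simp [h])
  change d.degree ≤ e
  omega

variable {ℓ : ι → MvPolynomial σ R}

theorem IsHomogeneous.exists_sum_eq_of_mem_span {p : MvPolynomial σ R} {e : ℕ}
    (hp : p.IsHomogeneous (e + 1)) (hℓ : ∀ j, (ℓ j).IsHomogeneous 1) {D : Finset ι}
    (hmem : p ∈ Ideal.span (ℓ '' D)) :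
    ∃ t : ι → MvPolynomial σ R, (∀ j, (t j).IsHomogeneous e) ∧ p = ∑ j ∈ D, t j * ℓ j := by
  obtain ⟨a, rfl⟩ := (Submodule.mem_span_image_finset_iff_exists_fun' _).1 hmem
  refine ⟨fun j => homogeneousComponent e (a j),
    fun j => homogeneousComponent_isHomogeneous _ _, ?_⟩
  rw [← homogeneousComponent_eq_self hp]
  simp [homogeneousComponent_succ_mul_of_isHomogeneous_one (hℓ _)]

theorem IsHomogeneous.eq_zero_of_mem_span {p : MvPolynomial σ R} (hp : p.IsHomogeneous 0)
    (hℓ : ∀ j, (ℓ j).IsHomogeneous 1) {D : Finset ι} (hmem : p ∈ Ideal.span (ℓ '' D)) :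
    p = 0 := by
  obtain ⟨a, rfl⟩ := (Submodule.mem_span_image_finset_iff_exists_fun' _).1 hmem
  rw [← homogeneousComponent_eq_self hp]
  simp [homogeneousComponent_zero_mul_of_isHomogeneous_one (hℓ _)]

variable (c : ι → R) {D : Finset ι} {i : ι}

theorem eq_zero_of_homogeneousComponent_zero_mem_span (hℓ : ∀ j, (ℓ j).IsHomogeneous 1)
    {u : MvPolynomial σ R} (hu : u.totalDegree ≤ 0)
    (hmem : homogeneousComponent 0 u ∈ Ideal.span (ℓ '' D)) : u = 0 := by
  have hu0 : homogeneousComponent 0 u = u := by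
    rw [homogeneousComponent_zero, ← totalDegree_eq_zero_iff_eq_C.1 (by omega)]
  rw [← hu0]
  exact (homogeneousComponent_isHomogeneous 0 u).eq_zero_of_mem_span hℓ hmem

theorem exists_sub_mem_span_totalDegree_le (hℓ : ∀ j, (ℓ j).IsHomogeneous 1)
    {w : MvPolynomial σ R} {e : ℕ} (hw : w.totalDegree ≤ e + 1)
    (hmem : homogeneousComponent (e + 1) w ∈ Ideal.span (ℓ '' D)) :
    ∃ w', w - w' ∈ Ideal.span ((fun j => ℓ j - C (c j)) '' D) ∧ w'.totalDegree ≤ e := by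
  obtain ⟨t, ht, hrep⟩ :=
    (homogeneousComponent_isHomogeneous (e + 1) w).exists_sum_eq_of_mem_span hℓ hmem
  refine ⟨w - ∑ j ∈ D, t j * (ℓ j - C (c j)), ?_, ?_⟩
  · rw [sub_sub_cancel]
    exact Ideal.sum_mem _ fun j hj => Ideal.mul_mem_left _ _ (Ideal.subset_span ⟨j, hj, rfl⟩)
  · have hw' : w - ∑ j ∈ D, t j * (ℓ j - C (c j)) =
        (w - homogeneousComponent (e + 1) w) + ∑ j ∈ D, t j * C (c j) := by
      rw [hrep]
      simp only [mul_sub, Finset.sum_sub_distrib]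
      ring
    rw [hw']
    exact (totalDegree_add _ _).trans (max_le (totalDegree_sub_homogeneousComponent_le hw)
      (totalDegree_finsetSum_le fun j _ => ((ht j).mul (isHomogeneous_C _ _)).totalDegree_le))

/-- The top-degree forms of the elements of `I` lie in `J`. Components above the total degree
vanish, so it is harmless to allow any `n ≥ totalDegree p`. -/
def InitialFormsMem (I J : Ideal (MvPolynomial σ R)) : Prop :=
  ∀ p ∈ I, ∀ n, p.totalDegree ≤ n → homogeneousComponent n p ∈ J

theorem initialFormsMem_bot (J : Ideal (MvPolynomial σ R)) : InitialFormsMem ⊥ J := by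
  rintro p hp n -
  rw [Ideal.mem_bot.1 hp, map_zero]
  exact J.zero_mem

theorem homogeneousComponent_mem_of_mul_sub_C_mem (hℓ : ∀ j, (ℓ j).IsHomogeneous 1)
    (hin : InitialFormsMem (Ideal.span ((fun j => ℓ j - C (c j)) '' D)) (Ideal.span (ℓ '' D)))
    (hreg : IsRegularMod (Ideal.span (ℓ '' D)) (ℓ i)) {u : MvPolynomial σ R} {e : ℕ}
    (hu : u.totalDegree ≤ e)
    (hmem : (ℓ i - C (c i)) * u ∈ Ideal.span ((fun j => ℓ j - C (c j)) '' D)) :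
    homogeneousComponent e u ∈ Ideal.span (ℓ '' D) := by
  have h := hin _ hmem (e + 1) (by grw [mul_comm, totalDegree_mul_sub_C_le (hℓ i), hu])
  rw [mul_comm, homogeneousComponent_succ_mul_sub_C (hℓ i) hu, mul_comm] at h
  exact hreg _ h

theorem isRegularMod_sub_C (hℓ : ∀ j, (ℓ j).IsHomogeneous 1)
    (hin : InitialFormsMem (Ideal.span ((fun j => ℓ j - C (c j)) '' D)) (Ideal.span (ℓ '' D)))
    (hreg : IsRegularMod (Ideal.span (ℓ '' D)) (ℓ i)) :
    IsRegularMod (Ideal.span ((fun j => ℓ j - C (c j)) '' D)) (ℓ i - C (c i)) := by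
  suffices ∀ e u, u.totalDegree ≤ e →
      (ℓ i - C (c i)) * u ∈ Ideal.span ((fun j => ℓ j - C (c j)) '' D) →
      u ∈ Ideal.span ((fun j => ℓ j - C (c j)) '' D) from fun u => this _ u le_rfl
  intro e
  induction e with
  | zero =>
    intro u hu hmem
    rw [eq_zero_of_homogeneousComponent_zero_mem_span hℓ hu
      (homogeneousComponent_mem_of_mul_sub_C_mem c hℓ hin hreg hu hmem)]
    exact Ideal.zero_mem _
  | succ e ih =>
    intro u hu hmem
    obtain ⟨u', hu', hdeg⟩ := exists_sub_mem_span_totalDegree_le c hℓ hu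
      (homogeneousComponent_mem_of_mul_sub_C_mem c hℓ hin hreg hu hmem)
    have := ih u' hdeg (by
      rw [show (ℓ i - C (c i)) * u' = (ℓ i - C (c i)) * u - (ℓ i - C (c i)) * (u - u') by ring]
      exact Ideal.sub_mem _ hmem (Ideal.mul_mem_left _ _ hu'))
    simpa using Ideal.add_mem _ hu' this

theorem initialFormsMem_insert [DecidableEq ι] (hℓ : ∀ j, (ℓ j).IsHomogeneous 1)
    (hin : InitialFormsMem (Ideal.span ((fun j => ℓ j - C (c j)) '' D)) (Ideal.span (ℓ '' D)))
    (hreg : IsRegularMod (Ideal.span (ℓ '' D)) (ℓ i)) :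
    InitialFormsMem (Ideal.span ((fun j => ℓ j - C (c j)) '' ↑(insert i D)))
      (Ideal.span (ℓ '' ↑(insert i D))) := by
  simp only [Finset.coe_insert, Set.image_insert_eq, Ideal.span_insert]
  rintro p hp n hn
  obtain ⟨_, ha, b, hb, rfl⟩ := Submodule.mem_sup.1 hp
  obtain ⟨v, rfl⟩ := Ideal.mem_span_singleton'.1 ha
  clear hp ha
  induction hv : v.totalDegree using Nat.strong_induction_on generalizing v b with
  | _ e ih =>
  have hbdeg : b.totalDegree ≤ max n (e + 1) := by
    rw [show b = (v * (ℓ i - C (c i)) + b) - v * (ℓ i - C (c i)) by ring]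
    grw [totalDegree_sub, hn, totalDegree_mul_sub_C_le (hℓ i), hv]
  rcases lt_or_ge e n with hen | hne
  · obtain ⟨n, rfl⟩ : ∃ n', n = n' + 1 := ⟨n - 1, by omega⟩
    rw [map_add, homogeneousComponent_succ_mul_sub_C (hℓ i) (by omega)]
    exact Submodule.add_mem _ (Submodule.mem_sup_left (Ideal.mem_span_singleton'.2 ⟨_, rfl⟩))
      (Submodule.mem_sup_right (hin b hb _ (by omega)))
  -- `v * Lᵢ` has degree above `n`, so its top form `ℓᵢ · top(v)` cancels against that of `b`
  have hve : homogeneousComponent e v ∈ Ideal.span (ℓ '' D) := by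
    have htop := homogeneousComponent_eq_zero (e + 1) (v * (ℓ i - C (c i)) + b) (by omega)
    rw [map_add, homogeneousComponent_succ_mul_sub_C (hℓ i) hv.le, add_eq_zero_iff_eq_neg] at htop
    refine hreg _ ?_
    rw [mul_comm, htop]
    exact neg_mem (hin b hb _ (by omega))
  rcases e with _ | e
  · obtain rfl := eq_zero_of_homogeneousComponent_zero_mem_span hℓ hv.le hve
    rw [zero_mul, zero_add] at hn ⊢
    exact Submodule.mem_sup_right (hin b hb n hn)
  obtain ⟨v', hv', hdeg⟩ := exists_sub_mem_span_totalDegree_le c hℓ hv.le hve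
  have hsplit : v' * (ℓ i - C (c i)) + (b + (v - v') * (ℓ i - C (c i))) =
      v * (ℓ i - C (c i)) + b := by ring
  have := ih v'.totalDegree (by omega) (b + (v - v') * (ℓ i - C (c i)))
    (Ideal.add_mem _ hb (Ideal.mul_mem_right _ _ hv')) v' (by rwa [hsplit]) rfl
  rwa [hsplit] at this

end TopDegreeForms

end MvPolynomial

section GenericLinearForm

variable (R : Type*) [CommRing R] {ι : Type*} (κ : Type*) [Fintype κ]

/-- `genericLinearForm` with all variables on one level; `sumAlgEquiv` identifies the two rings. -/
noncomputable def flatGenericLinearForm (j : ι) : MvPolynomial (κ ⊕ ι × κ) R :=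
  ∑ l, X (.inr (j, l)) * X (.inl l)

noncomputable def genericLinearForm (j : ι) : MvPolynomial κ (MvPolynomial (ι × κ) R) :=
  ∑ l, C (X (j, l)) * X l

variable {κ} in
noncomputable def formsAndVarsIdeal (D : Finset ι) (C : Finset κ) :
    Ideal (MvPolynomial (κ ⊕ ι × κ) R) :=
  Ideal.span (flatGenericLinearForm R κ '' D ∪ (X ∘ Sum.inl) '' C)

variable {R κ}

theorem isRegularMod_flatGenericLinearForm_of_X {D : Finset ι} {C : Finset κ} {j : ι} {p : κ}
    (hj : j ∉ D) (hp : IsRegularMod (formsAndVarsIdeal R D C) (X (.inl p))) :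
    IsRegularMod (formsAndVarsIdeal R D C) (flatGenericLinearForm R κ j) := by
  classical
  have hX {s : κ ⊕ ι × κ} (hs : s ≠ .inr (j, p)) : X s ∈ supported R {.inr (j, p)}ᶜ :=
    X_mem_supported_of_mem hs
  have hform : flatGenericLinearForm R κ j = X (.inl p) * X (.inr (j, p)) +
      ∑ l ∈ Finset.univ.erase p, X (.inr (j, l)) * X (.inl l) := by
    rw [flatGenericLinearForm, ← Finset.add_sum_erase _ _ (Finset.mem_univ p), mul_comm]
  rw [hform]
  refine isRegularMod_mul_X_add ?_ (hX (by simp)) ?_ hp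
  · rintro _ (⟨k, hk, rfl⟩ | ⟨l, -, rfl⟩)
    · exact Subalgebra.sum_mem _ fun l _ => Subalgebra.mul_mem _
        (hX (by rintro ⟨⟩; exact hj hk)) (hX (by simp))
    · exact hX (by simp)
  · exact Subalgebra.sum_mem _ fun l hl => Subalgebra.mul_mem _
      (hX (by simpa using Finset.ne_of_mem_erase hl)) (hX (by simp))

theorem isRegularMod_X_formsAndVarsIdeal (D : Finset ι) {C : Finset κ} {l : κ}
    (hcard : D.card + C.card < Fintype.card κ) (hl : l ∉ C) :
    IsRegularMod (formsAndVarsIdeal R D C) (X (.inl l)) := by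
  classical
  induction D using Finset.induction_on generalizing C l with
  | empty =>
    rw [← one_mul (X _), ← add_zero (1 * X _)]
    refine isRegularMod_mul_X_add ?_ (Subalgebra.one_mem _) (Subalgebra.zero_mem _)
      (IsRegularMod.one _)
    rintro _ (⟨k, hk, rfl⟩ | ⟨l', hl', rfl⟩)
    · simp at hk
    · exact X_mem_supported_of_mem (by rintro ⟨⟩; exact hl hl')
  | insert j D hj ih =>
    rw [Finset.card_insert_of_notMem hj] at hcard
    obtain ⟨p, -, hp⟩ := Finset.exists_mem_notMem_of_card_lt_card (s := insert l C)
      (t := Finset.univ) (by grind [Finset.card_insert_le, Finset.card_univ])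
    have hrow : formsAndVarsIdeal R (insert j D) C =
        formsAndVarsIdeal R D C ⊔ Ideal.span {flatGenericLinearForm R κ j} := by
      rw [formsAndVarsIdeal, Finset.coe_insert, Set.image_insert_eq, Set.insert_union,
        Ideal.span_insert, sup_comm, formsAndVarsIdeal]
    have hcol : formsAndVarsIdeal R D (insert l C) =
        formsAndVarsIdeal R D C ⊔ Ideal.span {X (.inl l)} := by
      rw [formsAndVarsIdeal, Finset.coe_insert, Set.image_insert_eq, Set.union_insert,
        Ideal.span_insert, sup_comm, formsAndVarsIdeal, Function.comp_apply]
    rw [hrow]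
    refine (ih (by omega) hl).swap ?_
    rw [← hcol]
    exact isRegularMod_flatGenericLinearForm_of_X hj
      (ih (by grind [Finset.card_insert_le]) hp)

theorem isRegularMod_flatGenericLinearForm {D : Finset ι} {j : ι}
    (hD : D.card < Fintype.card κ) (hj : j ∉ D) :
    IsRegularMod (Ideal.span (flatGenericLinearForm R κ '' D)) (flatGenericLinearForm R κ j) := by
  obtain ⟨p⟩ : Nonempty κ := Fintype.card_pos_iff.1 (D.card.zero_le.trans_lt hD)
  simpa [formsAndVarsIdeal] using isRegularMod_flatGenericLinearForm_of_X hj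
    (isRegularMod_X_formsAndVarsIdeal (R := R) D (C := ∅) (by simpa) (Finset.notMem_empty p))

theorem sumAlgEquiv_flatGenericLinearForm (j : ι) :
    sumAlgEquiv R κ (ι × κ) (flatGenericLinearForm R κ j) = genericLinearForm R κ j := by
  simp [flatGenericLinearForm, genericLinearForm, sumAlgEquiv_X_inl, sumAlgEquiv_X_inr]

theorem isHomogeneous_genericLinearForm (j : ι) : (genericLinearForm R κ j).IsHomogeneous 1 :=
  IsHomogeneous.sum _ _ _ fun l _ => isHomogeneous_C_mul_X _ l

theorem isRegularMod_genericLinearForm {D : Finset ι} {j : ι} (hD : D.card < Fintype.card κ)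
    (hj : j ∉ D) :
    IsRegularMod (Ideal.span (genericLinearForm R κ '' D)) (genericLinearForm R κ j) := by
  have h := (IsRegularMod.map_ringEquiv_iff (sumAlgEquiv R κ (ι × κ)).toRingEquiv).2
    (isRegularMod_flatGenericLinearForm (R := R) hD hj)
  simpa only [Ideal.map_span, Set.image_image, AlgEquiv.coe_ringEquiv,
    sumAlgEquiv_flatGenericLinearForm] using h

theorem initialFormsMem_genericLinearForm (c : ι → MvPolynomial (ι × κ) R) {D : Finset ι}
    (hD : D.card ≤ Fintype.card κ) :
    InitialFormsMem (Ideal.span ((fun j => genericLinearForm R κ j - C (c j)) '' D))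
      (Ideal.span (genericLinearForm R κ '' D)) := by
  classical
  induction D using Finset.induction_on with
  | empty => simpa using initialFormsMem_bot _
  | insert j D hj ih =>
    rw [Finset.card_insert_of_notMem hj] at hD
    exact initialFormsMem_insert c isHomogeneous_genericLinearForm (ih (by omega))
      (isRegularMod_genericLinearForm (by omega) hj)

theorem isRegularMod_genericLinearForm_sub_C (c : ι → MvPolynomial (ι × κ) R) {D : Finset ι}
    {i : ι} (hD : D.card < Fintype.card κ) (hi : i ∉ D) :
    IsRegularMod (Ideal.span ((fun j => genericLinearForm R κ j - C (c j)) '' D))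
      (genericLinearForm R κ i - C (c i)) :=
  isRegularMod_sub_C c isHomogeneous_genericLinearForm
    (initialFormsMem_genericLinearForm c hD.le) (isRegularMod_genericLinearForm hD hi)

end GenericLinearForm

/-- Claim 1 in the proof of Proposition `p:regular-seq-inhomog`:
with `R = R₀[{A_{ij}}]`, `S = R[X₁, …, X_n]`, and `L_i = ∑_j A_{ij} X_j − c_i` as in
Statement 13, the images of `L₁, …, L_m` in the localization `S[A₁₁⁻¹]` form a regular
sequence: the image of each `L_i` in `S[A₁₁⁻¹]/(L₁, …, L_{i−1})` is a non-zero-divisor. -/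
theorem stmt14 {R₀ : Type*} [CommRing R₀] (m n : ℕ) (hm : 0 < m) (hn : 0 < n)
    (hmn : m ≤ n)
    (c : Fin m → MvPolynomial (Fin m × Fin n) R₀) :
    ∀ i : Fin m,
      Ideal.Quotient.mk
        (Ideal.span {p : Localization.Away
            ((C (X ((⟨0, hm⟩ : Fin m), (⟨0, hn⟩ : Fin n)))) :
              MvPolynomial (Fin n) (MvPolynomial (Fin m × Fin n) R₀)) |
          ∃ j : Fin m, j < i ∧
            p = algebraMap (MvPolynomial (Fin n) (MvPolynomial (Fin m × Fin n) R₀)) _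
              ((∑ l : Fin n, C (X (j, l)) * X l) - C (c j))})
        (algebraMap (MvPolynomial (Fin n) (MvPolynomial (Fin m × Fin n) R₀)) _
          ((∑ l : Fin n, C (X (i, l)) * X l) - C (c i)))
      ∈ nonZeroDivisors _ := by
  intro i
  have hS := isRegularMod_genericLinearForm_sub_C (κ := Fin n) c (D := Finset.Iio i)
    (by rw [Fin.card_Iio, Fintype.card_fin]; omega) Finset.notMem_Iio_self
  unfold genericLinearForm at hS
  set a : MvPolynomial (Fin n) (MvPolynomial (Fin m × Fin n) R₀) := C (X (⟨0, hm⟩, ⟨0, hn⟩))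
  rw [IsRegularMod.mk_mem_nonZeroDivisors_iff]
  convert hS.map_algebraMap (S := Localization.Away a) (Submonoid.powers a) using 1
  rw [Ideal.map_span]
  congr 1
  ext p
  simp [eq_comm]
end

section
/- Let R₀ be a commutative ring and let R be the polynomial ring over R₀ in the variables b′₁, …, b′_n, b₁, …, b_{n+r}, and V_{ij} for 1 ≤ i ≤ r and 1 ≤ j ≤ n+r. Let {1, …, n} = S₁ ⊔ ⋯ ⊔ S_k be a partition, and for each 1 ≤ t ≤ k let I_t ⊆ R be the ideal generated by { b_j·b′_l − b_l·b′_j : j, l ∈ S_t }. Define L_i = ∑_{j=1}^{n+r} V_{ij}·b_j ∈ R for 1 ≤ i ≤ r. Then the images of L₁, …, L_r in the quotient ring R/(I₁ + ⋯ + I_k) form a regular sequence: for each i = 1, …, r, the image of L_i in R/(I₁ + ⋯ + I_k + (L₁, …, L_{i−1})) is a non-zero-divisor. -/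
/-!
After a change of variables isolating the pivots `V_{j,n+j}` and `b_{n+j}`, the ring
`R/(I₁ + ⋯ + I_k)` becomes a polynomial ring `D[V_{1,n+1}, …, V_{r,n+r}]` with
`D = F[b_{n+1}, …, b_{n+r}]` for an auxiliary base ring `F` (the remaining variables modulo the
minors), and `L_j = V_{j,n+j} b_{n+j} + c_j` with `c_j ∈ D`. Forms `X_j g_j + c_j` are regular
in any order as soon as each `g_t` is a non-zero-divisor modulo the ideal of any set of the other
`g`'s, which holds for the variables `b_{n+j}` of `D`. This is proved by induction on the number
of variables: splitting off one variable `X`, everything rests on the fact that if `x` is regular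
modulo `I` and `a` is regular modulo `I + (x)`, then `x` is regular modulo `I[X] + (aX + b)`;
this lets the induction pass to the base ring `D/(x)`.
-/

open MvPolynomial
open scoped nonZeroDivisors

namespace Ideal

variable {A B : Type*} [CommRing A] [CommRing B]

def IsRegularMod (J : Ideal A) (a : A) : Prop := ∀ f, f * a ∈ J → f ∈ J

theorem isRegularMod_iff_mk_mem_nonZeroDivisors {J : Ideal A} {a : A} :
    J.IsRegularMod a ↔ Quotient.mk J a ∈ (A ⧸ J)⁰ := by
  simp only [IsRegularMod, mem_nonZeroDivisors_iff_right, Quotient.mk_surjective.forall,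
    ← map_mul, Quotient.eq_zero_iff_mem]

theorem isRegularMod_ker_iff {f : A →+* B} (hf : Function.Surjective f) {a : A} :
    (RingHom.ker f).IsRegularMod a ↔ f a ∈ B⁰ := by
  simp only [IsRegularMod, mem_nonZeroDivisors_iff_right, hf.forall, RingHom.mem_ker, map_mul]

theorem isRegularMod_map_iff {F : Type*} [FunLike F A B] [RingHomClass F A B] {f : F}
    (hf : Function.Surjective f) {J : Ideal A} {a : A} :
    (J.map f).IsRegularMod (f a) ↔ (RingHom.ker f ⊔ J).IsRegularMod a := by
  simp only [IsRegularMod, hf.forall, ← map_mul, ← mem_comap, comap_map_of_surjective' f hf,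
    sup_comm]

theorem isRegularMod_map_equiv_iff {F : Type*} [EquivLike F A B] [RingEquivClass F A B] (e : F)
    {J : Ideal A} {a : A} : (J.map e).IsRegularMod (e a) ↔ J.IsRegularMod a := by
  rw [isRegularMod_map_iff (EquivLike.surjective e), RingHom.ker_equiv e, bot_sup_eq]

end Ideal

namespace Polynomial

variable {A : Type*} [CommRing A]

theorem isRegularMod_map_C_of_coeff {I : Ideal A} {p : A[X]} (n : ℕ)
    (h : I.IsRegularMod (p.coeff n)) : (I.map C).IsRegularMod p := by
  have hker : RingHom.ker (mapRingHom (Ideal.Quotient.mk I)) = I.map C := by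
    rw [ker_mapRingHom, Ideal.mk_ker]
  rw [← hker, Ideal.isRegularMod_ker_iff (map_surjective _ Ideal.Quotient.mk_surjective)]
  rw [Ideal.isRegularMod_iff_mk_mem_nonZeroDivisors] at h
  exact mem_nonzeroDivisors_of_coeff_mem n (by simpa using h)

theorem isRegularMod_span_linear_C {x : A} (a b : A) (hx : x ∈ A⁰)
    (ha : (Ideal.span {x}).IsRegularMod a) :
    (Ideal.span {C a * X + C b}).IsRegularMod (C x) := by
  intro q hq
  obtain ⟨h, hqh⟩ := Ideal.mem_span_singleton'.mp hq
  set π := mapRingHom (Ideal.Quotient.mk (Ideal.span {x}))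
  -- modulo `x` the right side `q * x` vanishes, while the linear form stays a non-zero-divisor
  have hπh : π h = 0 := by
    rw [Ideal.isRegularMod_iff_mk_mem_nonZeroDivisors] at ha
    have hlin : π (C a * X + C b) ∈ (A ⧸ Ideal.span {x})[X]⁰ :=
      mem_nonzeroDivisors_of_coeff_mem 1 (by simpa [π] using ha)
    refine (mem_nonZeroDivisors_iff_right.mp hlin) _ ?_
    rw [← map_mul, hqh, map_mul]
    simp [π, Ideal.Quotient.eq_zero_iff_mem.mpr (Ideal.mem_span_singleton_self x)]
  obtain ⟨h', rfl⟩ : ∃ h', h' * C x = h := by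
    rw [← Ideal.mem_span_singleton', ← Set.image_singleton, ← Ideal.map_span,
      ← Ideal.mk_ker (I := Ideal.span {x}), ← ker_mapRingHom]
    exact hπh
  have hCx : C x ∈ A[X]⁰ := mem_nonzeroDivisors_of_coeff_mem 0 (by simpa using hx)
  have : q = h' * (C a * X + C b) :=
    (mem_nonZeroDivisors_iff_right.mp hCx) _ (by rw [sub_mul, ← hqh]; ring) |> sub_eq_zero.mp
  exact Ideal.mem_span_singleton'.mpr ⟨h', this.symm⟩

theorem isRegularMod_map_C_sup_span_linear_C {I : Ideal A} {x : A} (a b : A)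
    (hx : I.IsRegularMod x) (ha : (I ⊔ Ideal.span {x}).IsRegularMod a) :
    (I.map C ⊔ Ideal.span {C a * X + C b}).IsRegularMod (C x) := by
  set π := mapRingHom (Ideal.Quotient.mk I)
  have hker : RingHom.ker π = I.map C := by rw [ker_mapRingHom, Ideal.mk_ker]
  rw [← hker, ← Ideal.isRegularMod_map_iff (map_surjective _ Ideal.Quotient.mk_surjective),
    Ideal.map_span, Set.image_singleton]
  rw [← Ideal.mk_ker (I := I), ← Ideal.isRegularMod_map_iff Ideal.Quotient.mk_surjective,
    Ideal.map_span, Set.image_singleton] at ha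
  rw [← Ideal.mk_ker (I := I), Ideal.isRegularMod_ker_iff Ideal.Quotient.mk_surjective] at hx
  simpa [π] using isRegularMod_span_linear_C _ (Ideal.Quotient.mk I b) hx ha

end Polynomial

section TotallyRegular

variable {ι A : Type*} [CommRing A]

def IsTotallyRegular (g : ι → A) : Prop :=
  ∀ (s : Set ι) (t : ι), t ∉ s → (Ideal.span (g '' s)).IsRegularMod (g t)

namespace IsTotallyRegular

theorem comp {κ : Type*} {g : ι → A} (hg : IsTotallyRegular g) {e : κ → ι}
    (he : Function.Injective e) : IsTotallyRegular (g ∘ e) := by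
  intro s t ht
  rw [Set.image_comp]
  exact hg _ _ (he.mem_set_image.not.mpr ht)

theorem option_elim_comp {κ : Type*} {x : A} {g : ι → A}
    (hg : IsTotallyRegular fun o : Option ι => o.elim x g) {e : κ → ι}
    (he : Function.Injective e) : IsTotallyRegular fun o : Option κ => o.elim x (g ∘ e) := by
  convert hg.comp (Option.map_injective he) using 1
  funext o; cases o <;> rfl

theorem mk_span_singleton {x : A} {g : ι → A}
    (hg : IsTotallyRegular fun o : Option ι => o.elim x g) :
    IsTotallyRegular fun i => Ideal.Quotient.mk (Ideal.span {x}) (g i) := by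
  intro s t ht
  have key := hg (insert none (some '' s)) (some t) (by simpa using ht)
  rw [Set.image_insert_eq, Set.image_image, Ideal.span_insert] at key
  rw [← Set.image_image (Ideal.Quotient.mk _), ← Ideal.map_span,
    Ideal.isRegularMod_map_iff Ideal.Quotient.mk_surjective, Ideal.mk_ker]
  simpa using key

end IsTotallyRegular

theorem MvPolynomial.isTotallyRegular_X {σ R : Type*} [CommRing R] :
    IsTotallyRegular (X : σ → MvPolynomial σ R) := by
  intro s t ht f hf
  rw [mem_ideal_span_X_image] at hf ⊢
  intro m hm
  obtain ⟨i, hi, hmi⟩ := hf (m + Finsupp.single t 1) (by simpa [support_mul_X] using hm)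
  have : t ≠ i := by rintro rfl; exact ht hi
  exact ⟨i, hi, by simpa [Finsupp.single_apply, this] using hmi⟩

end TotallyRegular

namespace MvPolynomial

variable {σ τ D D' : Type*} [CommRing D] [CommRing D']

noncomputable def linForm (g c : σ → D) (j : σ) : MvPolynomial σ D := X j * C (g j) + C (c j)

theorem rename_linForm_comp (e : σ ≃ τ) (g c : τ → D) (j : σ) :
    rename e (linForm (g ∘ e) (c ∘ e) j) = linForm g c (e j) := by
  simp [linForm]

theorem map_linForm (f : D →+* D') (g c : σ → D) (j : σ) :
    map f (linForm g c j) = linForm (f ∘ g) (f ∘ c) j := by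
  simp [linForm]

theorem optionEquivLeft_linForm_none (g c : Option σ → D) :
    optionEquivLeft D σ (linForm g c none) =
      Polynomial.C (C (g none)) * Polynomial.X + Polynomial.C (C (c none)) := by
  rw [linForm, map_add, map_mul, optionEquivLeft_X_none, optionEquivLeft_C, optionEquivLeft_C,
    mul_comm]

theorem map_optionEquivLeft_span_linForm_image_some (g c : Option σ → D) (s : Set σ) :
    (Ideal.span (linForm g c '' (some '' s))).map (optionEquivLeft D σ) =
      (Ideal.span (linForm (g ∘ some) (c ∘ some) '' s)).map Polynomial.C := by
  simp only [Ideal.map_span, Set.image_image]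
  congr 1
  refine Set.image_congr fun j _ => ?_
  simp [linForm, optionEquivLeft_X_some, optionEquivLeft_C]

theorem isRegularMod_span_linForm_image_insert_none_C {x : D} {g c : Option σ → D} {s : Set σ}
    (hx : (Ideal.span (linForm (g ∘ some) (c ∘ some) '' s)).IsRegularMod (C x))
    (hgx : (Ideal.span (linForm (Ideal.Quotient.mk (Ideal.span {x}) ∘ g ∘ some)
      (Ideal.Quotient.mk _ ∘ c ∘ some) '' s)).IsRegularMod
        (C (Ideal.Quotient.mk (Ideal.span {x}) (g none)))) :
    (Ideal.span (linForm g c '' insert none (some '' s))).IsRegularMod (C x) := by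
  rw [← Ideal.isRegularMod_map_equiv_iff (optionEquivLeft D σ), optionEquivLeft_C,
    Set.image_insert_eq, Ideal.span_insert, Ideal.map_sup, sup_comm,
    map_optionEquivLeft_span_linForm_image_some, Ideal.map_span (optionEquivLeft D σ),
    Set.image_singleton, optionEquivLeft_linForm_none]
  refine Polynomial.isRegularMod_map_C_sup_span_linear_C _ _ hx ?_
  set π : MvPolynomial σ D →+* MvPolynomial σ (D ⧸ Ideal.span {x}) :=
    map (Ideal.Quotient.mk _)
  have hker : RingHom.ker π = Ideal.span {C x} := by
    rw [ker_map, Ideal.mk_ker, Ideal.map_span, Set.image_singleton]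
  rw [← hker, sup_comm, ← Ideal.isRegularMod_map_iff (f := π)
    (map_surjective _ Ideal.Quotient.mk_surjective), Ideal.map_span, Set.image_image]
  simpa only [π, map_linForm, map_C] using hgx

theorem isRegularMod_span_linForm_image_C [Finite σ] (x : D) (g c : σ → D) (s : Set σ)
    (hg : IsTotallyRegular fun o : Option σ => o.elim x g) :
    (Ideal.span (linForm g c '' s)).IsRegularMod (C x) := by
  refine Finite.induction_empty_option (P := fun σ => ∀ {D : Type _} [CommRing D] (x : D)
    (g c : σ → D) (s : Set σ), IsTotallyRegular (fun o : Option σ => o.elim x g) →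
      (Ideal.span (linForm g c '' s)).IsRegularMod (C x)) ?_ ?_ ?_ σ x g c s hg
  · intro α β e ih D _ x g c s hg
    have h := ih x (g ∘ e) (c ∘ e) (e ⁻¹' s) (hg.option_elim_comp e.injective)
    rw [← Ideal.isRegularMod_map_equiv_iff (renameEquiv D e), Ideal.map_span,
      Set.image_image] at h
    simp only [renameEquiv_apply, rename_linForm_comp, rename_C] at h
    rwa [← Set.image_image (linForm g c) e, e.image_preimage] at h
  · intro D _ x g c s hg
    have h := hg ∅ none (Set.notMem_empty _)
    rw [← Ideal.isRegularMod_map_equiv_iff (isEmptyRingEquiv D PEmpty).symm] at h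
    simpa [Set.eq_empty_of_isEmpty s] using h
  · intro α _ ih D _ x g c s hg
    have hx := ih x (g ∘ some) (c ∘ some) (some ⁻¹' s)
      (hg.option_elim_comp (Option.some_injective _))
    by_cases hs : none ∈ s
    · rw [show s = insert none (some '' (some ⁻¹' s)) by ext (_ | j) <;> simp [hs]]
      refine isRegularMod_span_linForm_image_insert_none_C hx (ih _ _ _ _ ?_)
      convert hg.mk_span_singleton using 1
      funext o; cases o <;> rfl
    · rw [show s = some '' (some ⁻¹' s) by ext (_ | j) <;> simp [hs],
        ← Ideal.isRegularMod_map_equiv_iff (optionEquivLeft D α), optionEquivLeft_C,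
        map_optionEquivLeft_span_linForm_image_some]
      exact Polynomial.isRegularMod_map_C_of_coeff 0 (by simpa using hx)

theorem isRegularMod_span_linForm_image_none [Finite σ] {g : Option σ → D}
    (hg : IsTotallyRegular g) (c : Option σ → D) {s : Set (Option σ)} (hs : none ∉ s) :
    (Ideal.span (linForm g c '' s)).IsRegularMod (linForm g c none) := by
  rw [show s = some '' (some ⁻¹' s) by ext (_ | j) <;> simp [hs],
    ← Ideal.isRegularMod_map_equiv_iff (optionEquivLeft D σ),
    map_optionEquivLeft_span_linForm_image_some, optionEquivLeft_linForm_none]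
  refine Polynomial.isRegularMod_map_C_of_coeff 1 ?_
  simp only [Polynomial.coeff_add, Polynomial.coeff_C_mul_X, Polynomial.coeff_C, if_true,
    one_ne_zero, if_false, add_zero]
  exact isRegularMod_span_linForm_image_C _ _ _ _ (by simpa only [Option.elim_none_some] using hg)

theorem isRegularMod_span_linForm_image [Finite σ] {g : σ → D} (hg : IsTotallyRegular g)
    (c : σ → D) {s : Set σ} {t : σ} (ht : t ∉ s) :
    (Ideal.span (linForm g c '' s)).IsRegularMod (linForm g c t) := by
  classical
  set e := Equiv.optionSubtypeNe t
  have h := isRegularMod_span_linForm_image_none (hg.comp e.injective) (c ∘ e)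
    (s := e ⁻¹' s) (by simpa [e] using ht)
  rw [← Ideal.isRegularMod_map_equiv_iff (renameEquiv D e), Ideal.map_span,
    Set.image_image] at h
  simp only [renameEquiv_apply, rename_linForm_comp] at h
  rwa [← Set.image_image (linForm g c) e, e.image_preimage, Equiv.optionSubtypeNe_none] at h

theorem span_eq_map_map_C_of_subset_range {κ R : Type*} [CommRing R]
    {S : Set (MvPolynomial σ (MvPolynomial κ R))} (h : S ⊆ Set.range fun x => C (C x)) :
    Ideal.span S = ((Ideal.span ((fun x => C (C x)) ⁻¹' S)).map C).map C := by
  rw [Ideal.map_span, Ideal.map_span, Set.image_image, Set.image_preimage_eq_of_subset h]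

theorem isRegularMod_map_map_sup_span_linForm_X [Finite σ] {F : Type*} [CommRing F]
    (I : Ideal F) (c : σ → MvPolynomial σ F) {s : Set σ} {t : σ} (ht : t ∉ s) :
    ((I.map C).map C ⊔ Ideal.span (linForm X c '' s)).IsRegularMod (linForm X c t) := by
  set π : MvPolynomial σ (MvPolynomial σ F) →+* MvPolynomial σ (MvPolynomial σ (F ⧸ I)) :=
    map (map (Ideal.Quotient.mk I))
  have hker : RingHom.ker π = (I.map C).map C := by rw [ker_map, ker_map, Ideal.mk_ker]
  have hX : ⇑(map (Ideal.Quotient.mk I) : MvPolynomial σ F →+* _) ∘ X = X := by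
    funext j; exact map_X _ j
  rw [← hker, ← Ideal.isRegularMod_map_iff (f := π) (map_surjective _ (map_surjective _
    Ideal.Quotient.mk_surjective)), Ideal.map_span, Set.image_image]
  simp only [π, map_linForm, hX]
  exact isRegularMod_span_linForm_image isTotallyRegular_X _ ht

end MvPolynomial

section Pivot

variable (n r : ℕ) (R₀ : Type*) [CommRing R₀]

/-- `inl j ↦ V_{j,n+j}` and `inr j ↦ b_{n+j}`. -/
def pivotVar : Fin r ⊕ Fin r → Fin n ⊕ Fin (n + r) ⊕ Fin r × Fin (n + r) :=
  Sum.elim (fun j => .inr (.inr (j, Fin.natAdd n j))) (fun j => .inr (.inl (Fin.natAdd n j)))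

theorem pivotVar_injective : Function.Injective (pivotVar n r) := by
  rintro (i | i) (j | j) h <;> simp_all [pivotVar]

open Classical in
noncomputable def pivotEquiv : (Fin n ⊕ Fin (n + r) ⊕ Fin r × Fin (n + r)) ≃
    Fin r ⊕ (Fin r ⊕ ↥(Set.range (pivotVar n r))ᶜ) :=
  (Equiv.Set.sumCompl _).symm.trans <|
    (Equiv.sumCongr (Equiv.ofInjective _ (pivotVar_injective n r)).symm (Equiv.refl _)).trans <|
      Equiv.sumAssoc _ _ _

noncomputable def pivotAlgEquiv :
    MvPolynomial (Fin n ⊕ Fin (n + r) ⊕ Fin r × Fin (n + r)) R₀ ≃ₐ[R₀]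
      MvPolynomial (Fin r)
        (MvPolynomial (Fin r) (MvPolynomial ↥(Set.range (pivotVar n r))ᶜ R₀)) :=
  ((renameEquiv R₀ (pivotEquiv n r)).trans (sumAlgEquiv R₀ _ _)).trans
    (mapAlgEquiv _ (sumAlgEquiv R₀ _ _))

variable {n r R₀}

theorem pivotAlgEquiv_X_pivotVar_inl (j : Fin r) :
    pivotAlgEquiv n r R₀ (X (pivotVar n r (.inl j))) = X j := by
  simp [pivotAlgEquiv, pivotEquiv, Equiv.Set.sumCompl_symm_apply_of_mem,
    Equiv.ofInjective_symm_apply, sumAlgEquiv_X_inl]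

theorem pivotAlgEquiv_X_pivotVar_inr (j : Fin r) :
    pivotAlgEquiv n r R₀ (X (pivotVar n r (.inr j))) = C (X j) := by
  simp [pivotAlgEquiv, pivotEquiv, Equiv.Set.sumCompl_symm_apply_of_mem,
    Equiv.ofInjective_symm_apply, sumAlgEquiv_X_inl, sumAlgEquiv_X_inr]

theorem pivotAlgEquiv_X_of_notMem {v : Fin n ⊕ Fin (n + r) ⊕ Fin r × Fin (n + r)}
    (hv : v ∉ Set.range (pivotVar n r)) :
    pivotAlgEquiv n r R₀ (X v) = C (C (X ⟨v, hv⟩)) := by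
  simp [pivotAlgEquiv, pivotEquiv, Equiv.Set.sumCompl_symm_apply_of_notMem hv, sumAlgEquiv_X_inr]

theorem pivotAlgEquiv_X_mem_range_C {v : Fin n ⊕ Fin (n + r) ⊕ Fin r × Fin (n + r)}
    (hv : ∀ j, v ≠ pivotVar n r (.inl j)) :
    pivotAlgEquiv n r R₀ (X v) ∈
      (C : MvPolynomial (Fin r) (MvPolynomial _ R₀) →+* _).range := by
  by_cases hmem : v ∈ Set.range (pivotVar n r)
  · obtain ⟨j | j, rfl⟩ := hmem
    · exact absurd rfl (hv j)
    · exact ⟨_, (pivotAlgEquiv_X_pivotVar_inr j).symm⟩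
  · exact ⟨_, (pivotAlgEquiv_X_of_notMem hmem).symm⟩

theorem exists_pivotAlgEquiv_sum_X_mul_X (j : Fin r) :
    ∃ c, pivotAlgEquiv n r R₀
        (∑ l : Fin (n + r), X (.inr (.inr (j, l))) * X (.inr (.inl l))) =
      X j * C (X j) + C c := by
  rw [← Finset.add_sum_erase _ _ (Finset.mem_univ (Fin.natAdd n j)), map_add, map_mul]
  obtain ⟨c, hc⟩ : pivotAlgEquiv n r R₀ (∑ l ∈ Finset.univ.erase (Fin.natAdd n j),
      X (R := R₀) (.inr (.inr (j, l))) * X (.inr (.inl l))) ∈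
        (C : MvPolynomial (Fin r) (MvPolynomial _ R₀) →+* _).range := by
    rw [map_sum]
    refine sum_mem fun l hl => ?_
    rw [map_mul]
    refine mul_mem (pivotAlgEquiv_X_mem_range_C ?_) (pivotAlgEquiv_X_mem_range_C ?_)
    · simpa [pivotVar, eq_comm] using Finset.ne_of_mem_erase hl
    · simp [pivotVar]
  exact ⟨c, by rw [← hc]; exact congrArg₂ _ (congrArg₂ _ (pivotAlgEquiv_X_pivotVar_inl j)
    (pivotAlgEquiv_X_pivotVar_inr j)) rfl⟩

theorem pivotAlgEquiv_minor_mem_range_C_comp_C (j l : Fin n) :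
    pivotAlgEquiv n r R₀ (X (.inr (.inl (Fin.castAdd r j))) * X (.inl l)
      - X (.inr (.inl (Fin.castAdd r l))) * X (.inl j)) ∈ (C.comp C).range := by
  have hX : ∀ v, v ∉ Set.range (pivotVar n r) →
      pivotAlgEquiv n r R₀ (X v) ∈ (C.comp C).range :=
    fun v hv => ⟨_, (pivotAlgEquiv_X_of_notMem hv).symm⟩
  simp only [map_sub, map_mul]
  refine sub_mem (mul_mem (hX _ ?_) (hX _ ?_)) (mul_mem (hX _ ?_) (hX _ ?_)) <;>
    simp [pivotVar, Fin.ext_iff] <;> omega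

end Pivot

/-- the final regularity claim in the proof of Proposition `p:br-exact`:
over the polynomial ring `R` on the variables `b′₁, …, b′_n`, `b₁, …, b_{n+r}` and
`V_{ij}` (realized as `MvPolynomial (Fin n ⊕ Fin (n+r) ⊕ Fin r × Fin (n+r)) R₀`, with
`b′_j = X (inl j)`, `b_j = X (inr (inl j))`, `V_{ij} = X (inr (inr (i,j)))`), given a
partition of `{1, …, n}` into blocks (encoded by `part : Fin n → Fin k`), the generic
linear forms `L_i = ∑_j V_{ij} b_j` form a regular sequence modulo the sum
`I₁ + ⋯ + I_k` of the ideals of `2×2` minors `b_j b′_l − b_l b′_j` taken within each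
block: the image of each `L_i` in `R/(I₁ + ⋯ + I_k + (L₁, …, L_{i−1}))` is a
non-zero-divisor. -/
theorem stmt16 {R₀ : Type*} [CommRing R₀] (n r k : ℕ)
    (part : Fin n → Fin k) :
    ∀ i : Fin r,
      Ideal.Quotient.mk
        (Ideal.span
          ({p : MvPolynomial (Fin n ⊕ Fin (n + r) ⊕ Fin r × Fin (n + r)) R₀ |
              ∃ j l : Fin n, part j = part l ∧
                p = X (Sum.inr (Sum.inl (Fin.castAdd r j))) * X (Sum.inl l)
                  - X (Sum.inr (Sum.inl (Fin.castAdd r l))) * X (Sum.inl j)}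
            ∪ {p : MvPolynomial (Fin n ⊕ Fin (n + r) ⊕ Fin r × Fin (n + r)) R₀ |
              ∃ j : Fin r, j < i ∧
                p = ∑ l : Fin (n + r),
                  X (Sum.inr (Sum.inr (j, l))) * X (Sum.inr (Sum.inl l))}))
        (∑ l : Fin (n + r), X (Sum.inr (Sum.inr (i, l))) * X (Sum.inr (Sum.inl l)))
      ∈ nonZeroDivisors _ := by
  intro i
  choose c hc using exists_pivotAlgEquiv_sum_X_mul_X (n := n) (r := r) (R₀ := R₀)
  have hL : {p : MvPolynomial (Fin n ⊕ Fin (n + r) ⊕ Fin r × Fin (n + r)) R₀ |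
      ∃ j : Fin r, j < i ∧ p = ∑ l : Fin (n + r),
        X (Sum.inr (Sum.inr (j, l))) * X (Sum.inr (Sum.inl l))} =
      (fun j => ∑ l : Fin (n + r), X (Sum.inr (Sum.inr (j, l))) * X (Sum.inr (Sum.inl l))) ''
        {j | j < i} := by
    ext; simp [eq_comm]
  rw [← Ideal.isRegularMod_iff_mk_mem_nonZeroDivisors,
    ← Ideal.isRegularMod_map_equiv_iff (pivotAlgEquiv n r R₀), Ideal.map_span, Set.image_union,
    Ideal.span_union, span_eq_map_map_C_of_subset_range ?minors, hL, Set.image_image]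
  · simp only [hc]
    exact isRegularMod_map_map_sup_span_linForm_X _ c (lt_irrefl i)
  case minors =>
    rintro _ ⟨_, ⟨j, l, -, rfl⟩, rfl⟩
    exact pivotAlgEquiv_minor_mem_range_C_comp_C j l
end
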